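/- arXiv:0810.1007 — 7 statements merged into one kernel-verified Lean document; each statement's English description precedes it below -/
import Mathlib

section
/- Let n ≥ 1, let J : {1,…,n} × {1,…,n} → ℝ satisfy J_{ij} ≥ 0 for all 1 ≤ i,j ≤ n, and define the Lee–Yang partition function Z(h₁,…,hₙ) = Σ_{σ ∈ {-1,1}ⁿ} exp(Σ_{i,j=1}^n J_{ij} σ_i σ_j) · exp(Σ_{i=1}^n σ_i h_i) for (h₁,…,hₙ) ∈ ℂⁿ. Then Z(h₁,…,hₙ) ≠ 0 whenever Re(h_i) > 0 for all 1 ≤ i ≤ n. -/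
/-!
With `b_e = exp (-2 J_e) ∈ (0, 1]`, `z_i = exp (-2 h_i)` (so `‖z_i‖ < 1`) and `S = {i | σ_i = -1}`,
the partition function is a nonzero multiple of the multi-affine polynomial
`∑_S (∏_{e cut by S} b_e) ∏_{i ∈ S} z_i`. It has no zero in the open unit polydisc: for no edges
it is `∏ (1 + z_i)`, and adding an edge `{i, j}` multiplies the coefficients of `z_i` and `z_j`
in the bilinear dependence on `(z_i, z_j)` by `b`. This preserves zero-freeness, as one sees by
multiplying with the zero-free edge polynomial `1 + b z' + b w' + z' w'` and applying Asano's
contraction `A + B z + C w + D z w ↦ A + D u` twice.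
-/

open Finset Function

lemma normSq_one_add_mul_sub_normSq_add (b : ℝ) (z : ℂ) :
    Complex.normSq (1 + b * z) - Complex.normSq (b + z) =
      (1 - b ^ 2) * (1 - Complex.normSq z) := by
  simp only [Complex.normSq_apply, Complex.add_re, Complex.add_im, Complex.mul_re,
    Complex.mul_im, Complex.ofReal_re, Complex.ofReal_im, Complex.one_re, Complex.one_im]
  ring

lemma edge_poly_ne_zero {b : ℝ} (hb0 : 0 ≤ b) (hb1 : b ≤ 1) {z w : ℂ} (hz : ‖z‖ < 1)
    (hw : ‖w‖ < 1) : 1 + b * z + b * w + z * w ≠ 0 := by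
  intro H
  have hz' : Complex.normSq z < 1 := by rw [Complex.normSq_eq_norm_sq]; nlinarith [norm_nonneg z]
  have hw' : Complex.normSq w ≤ 1 := by rw [Complex.normSq_eq_norm_sq]; nlinarith [norm_nonneg w]
  have hsolve : 1 + b * z = -(w * (b + z)) := by linear_combination H
  have hle : Complex.normSq (1 + b * z) ≤ Complex.normSq (b + z) := by
    rw [hsolve, Complex.normSq_neg, Complex.normSq_mul]
    exact mul_le_of_le_one_left (Complex.normSq_nonneg _) hw'
  have hb : b = 1 := by
    by_contra hb
    have hpos : 0 < (1 - b ^ 2) * (1 - Complex.normSq z) :=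
      mul_pos (by nlinarith [lt_of_le_of_ne hb1 hb]) (by linarith)
    linarith [normSq_one_add_mul_sub_normSq_add b z]
  subst hb
  have hfac : (1 + z) * (1 + w) = 0 := by push_cast at H; linear_combination H
  rcases mul_eq_zero.1 hfac with h | h
  · rw [eq_neg_of_add_eq_zero_right h, norm_neg, norm_one] at hz; exact hz.false
  · rw [eq_neg_of_add_eq_zero_right h, norm_neg, norm_one] at hw; exact hw.false

lemma asano_contraction_s0 {A B C D : ℂ}
    (h : ∀ z w : ℂ, ‖z‖ < 1 → ‖w‖ < 1 → A + B * z + C * w + D * (z * w) ≠ 0)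
    {u : ℂ} (hu : ‖u‖ < 1) : A + D * u ≠ 0 := by
  intro hAu
  have hD : D ≠ 0 := by
    rintro rfl
    exact h 0 0 (by simp) (by simp) (by simpa using hAu)
  obtain ⟨r, hr⟩ : ∃ r, D * (r * r) + (B + C) * r + A = 0 :=
    exists_quadratic_eq_zero hD (IsAlgClosed.exists_eq_mul_self _)
  -- Vieta: the second root `r'` of the diagonal `z = w` satisfies `r * r' = A / D = -u`
  set r' := -(B + C) / D - r with hr'
  have hDr' : D * r' = -(B + C) - D * r := by rw [hr']; field_simp
  have hprod : r * r' = -u := by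
    apply mul_left_cancel₀ hD
    linear_combination r * hDr' - hr + hAu
  have hr'root : D * (r' * r') + (B + C) * r' + A = 0 := by
    linear_combination r' * hDr' - D * hprod + hAu
  have hsmall : ‖r‖ < 1 ∨ ‖r'‖ < 1 := by
    by_contra! hbig
    have : 1 ≤ ‖r * r'‖ := by rw [norm_mul]; nlinarith [hbig.1, hbig.2]
    rw [hprod, norm_neg] at this
    linarith
  rcases hsmall with hs | hs
  · exact h r r hs hs (by linear_combination hr)
  · exact h r' r' hs hs (by linear_combination hr'root)

lemma bilinear_ne_zero_scale_linear {A B C D : ℂ} {b : ℝ} (hb0 : 0 ≤ b) (hb1 : b ≤ 1)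
    (h : ∀ z w : ℂ, ‖z‖ < 1 → ‖w‖ < 1 → A + B * z + C * w + D * (z * w) ≠ 0)
    {z w : ℂ} (hz : ‖z‖ < 1) (hw : ‖w‖ < 1) :
    A + b * B * z + b * C * w + D * (z * w) ≠ 0 := by
  -- Asano-contract `P(z, w) * (1 + b z' + b w' + z' w')` in `(z, z')`, then in `(w, w')`
  have hzz : ∀ w w' : ℂ, ‖w‖ < 1 → ‖w'‖ < 1 → ∀ u : ℂ, ‖u‖ < 1 →
      (A + C * w) * (1 + b * w') + (B + D * w) * (b + w') * u ≠ 0 :=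
    fun w w' hw hw' _ hu => asano_contraction_s0 (B := (B + D * w) * (1 + b * w'))
      (C := (A + C * w) * (b + w')) (fun z z' hz hz' H =>
      mul_ne_zero (h z w hz hw) (edge_poly_ne_zero hb0 hb1 hz' hw') (by linear_combination H)) hu
  have hww := asano_contraction_s0 (A := A + b * B * z) (B := C + b * D * z) (C := b * A + B * z)
    (D := b * C + D * z)
    (fun w w' hw hw' H => hzz w w' hw hw' z hz (by linear_combination H)) hw
  intro H
  exact hww (by linear_combination H)

lemma sum_powerset_insert_insert {ι M : Type*} [DecidableEq ι] [AddCommMonoid M]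
    {s : Finset ι} {i j : ι} (hi : i ∉ s) (hj : j ∉ s) (hij : i ≠ j) (F : Finset ι → M) :
    ∑ S ∈ (insert i (insert j s)).powerset, F S =
      ∑ T ∈ s.powerset, (F T + F (insert i T) + F (insert j T) + F (insert i (insert j T))) := by
  rw [sum_powerset_insert (by simp [hij, hi]), sum_powerset_insert hj, sum_powerset_insert hj,
    ← sum_add_distrib, ← sum_add_distrib, ← sum_add_distrib]
  exact sum_congr rfl fun _ _ => by abel

section MultiAffine

variable {ι : Type*} [Fintype ι]

def multiAffine (c : Finset ι → ℂ) (z : ι → ℂ) : ℂ := ∑ S, c S * ∏ k ∈ S, z k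

lemma multiAffine_one (z : ι → ℂ) : multiAffine (fun _ => 1) z = ∏ k, (1 + z k) := by
  simp [multiAffine, prod_one_add]

variable [DecidableEq ι]

lemma multiAffine_update_update (c : Finset ι → ℂ) (z : ι → ℂ) {s : Finset ι} {i j : ι}
    (hi : i ∉ s) (hj : j ∉ s) (hij : i ≠ j) (hs : insert i (insert j s) = univ) (u v : ℂ) :
    multiAffine c (update (update z i u) j v) =
      (∑ T ∈ s.powerset, c T * ∏ k ∈ T, z k)
      + (∑ T ∈ s.powerset, c (insert i T) * ∏ k ∈ T, z k) * u
      + (∑ T ∈ s.powerset, c (insert j T) * ∏ k ∈ T, z k) * v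
      + (∑ T ∈ s.powerset, c (insert i (insert j T)) * ∏ k ∈ T, z k) * (u * v) := by
  rw [multiAffine, ← powerset_univ, ← hs, sum_powerset_insert_insert hi hj hij,
    sum_mul, sum_mul, sum_mul, ← sum_add_distrib, ← sum_add_distrib, ← sum_add_distrib]
  refine sum_congr rfl fun T hT => ?_
  have hiT : i ∉ T := fun h => hi (mem_powerset.1 hT h)
  have hjT : j ∉ T := fun h => hj (mem_powerset.1 hT h)
  have hT_eq : ∏ k ∈ T, update (update z i u) j v k = ∏ k ∈ T, z k :=
    prod_congr rfl fun k hk => by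
      rw [update_of_ne (ne_of_mem_of_not_mem hk hjT), update_of_ne (ne_of_mem_of_not_mem hk hiT)]
  rw [prod_insert hiT, prod_insert hjT, prod_insert (by simp [hij, hiT]), prod_insert hjT, hT_eq,
    update_self, update_of_ne hij, update_self]
  ring

lemma multiAffine_cutFactor_mul_ne_zero {c : Finset ι → ℂ}
    (hc : ∀ z : ι → ℂ, (∀ k, ‖z k‖ < 1) → multiAffine c z ≠ 0) {i j : ι} (hij : i ≠ j)
    {b : ℝ} (hb0 : 0 ≤ b) (hb1 : b ≤ 1) {z : ι → ℂ} (hz : ∀ k, ‖z k‖ < 1) :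
    multiAffine (fun S => (if (i ∈ S ↔ j ∈ S) then 1 else (b : ℂ)) * c S) z ≠ 0 := by
  set c' := fun S => (if (i ∈ S ↔ j ∈ S) then 1 else (b : ℂ)) * c S
  set s := univ \ {i, j}
  have hi : i ∉ s := by simp [s]
  have hj : j ∉ s := by simp [s]
  have hs : insert i (insert j s) = univ := by
    ext k; simp only [mem_insert, mem_sdiff, mem_univ, mem_singleton, true_and, iff_true, s]; tauto
  have hbil : ∀ u v : ℂ, ‖u‖ < 1 → ‖v‖ < 1 → _ := fun u v hu hv => by
    have := hc (update (update z i u) j v) fun k => by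
      simp only [update_apply]; split_ifs <;> simp_all
    rwa [multiAffine_update_update c z hi hj hij hs] at this
  have hsum {f g : Finset ι → ℂ} (hfg : ∀ T, i ∉ T → j ∉ T → f T = g T) :
      ∑ T ∈ s.powerset, f T = ∑ T ∈ s.powerset, g T :=
    sum_congr rfl fun T hT => hfg T (fun h => hi (mem_powerset.1 hT h))
      (fun h => hj (mem_powerset.1 hT h))
  have hA : ∑ T ∈ s.powerset, c' T * ∏ k ∈ T, z k = ∑ T ∈ s.powerset, c T * ∏ k ∈ T, z k :=
    hsum fun T hiT hjT => by simp [c', hiT, hjT]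
  have hB : ∑ T ∈ s.powerset, c' (insert i T) * ∏ k ∈ T, z k =
      b * ∑ T ∈ s.powerset, c (insert i T) * ∏ k ∈ T, z k := by
    rw [mul_sum]; exact hsum fun T hiT hjT => by simp [c', hjT, hij.symm, mul_assoc]
  have hC : ∑ T ∈ s.powerset, c' (insert j T) * ∏ k ∈ T, z k =
      b * ∑ T ∈ s.powerset, c (insert j T) * ∏ k ∈ T, z k := by
    rw [mul_sum]; exact hsum fun T hiT hjT => by simp [c', hiT, hij, mul_assoc]
  have hD : ∑ T ∈ s.powerset, c' (insert i (insert j T)) * ∏ k ∈ T, z k =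
      ∑ T ∈ s.powerset, c (insert i (insert j T)) * ∏ k ∈ T, z k :=
    hsum fun T hiT hjT => by simp [c']
  have hz_eq : z = update (update z i (z i)) j (z j) := by simp
  rw [hz_eq, multiAffine_update_update c' z hi hj hij hs, hA, hB, hC, hD]
  exact bilinear_ne_zero_scale_linear hb0 hb1 hbil (hz i) (hz j)

def cutWeight (b : ι × ι → ℝ) (E : Finset (ι × ι)) (S : Finset ι) : ℂ :=
  ∏ e ∈ E, if (e.1 ∈ S ↔ e.2 ∈ S) then 1 else (b e : ℂ)

lemma multiAffine_cutWeight_ne_zero {b : ι × ι → ℝ} (hb0 : ∀ e, 0 ≤ b e) (hb1 : ∀ e, b e ≤ 1)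
    (E : Finset (ι × ι)) {z : ι → ℂ} (hz : ∀ k, ‖z k‖ < 1) :
    multiAffine (cutWeight b E) z ≠ 0 := by
  induction E using Finset.induction_on generalizing z with
  | empty =>
    rw [show cutWeight b ∅ = fun _ => 1 from funext fun _ => prod_empty, multiAffine_one]
    refine prod_ne_zero_iff.2 fun k _ hk => ?_
    simpa [eq_neg_of_add_eq_zero_right hk] using hz k
  | @insert e E he ih =>
    rw [show cutWeight b (insert e E) = fun S => _ * cutWeight b E S from
      funext fun _ => prod_insert he]
    by_cases hloop : e.1 = e.2
    · simpa [hloop] using ih hz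
    · exact multiAffine_cutFactor_mul_ne_zero (fun _ => ih) hloop (hb0 e) (hb1 e) hz

end MultiAffine

section Ising

variable {ι : Type*} [DecidableEq ι]

def spinConfig (S : Finset ι) (i : ι) : ({-1, 1} : Finset ℤ) :=
  if i ∈ S then ⟨-1, by decide⟩ else ⟨1, by decide⟩

lemma spinConfig_val (S : Finset ι) (i : ι) :
    (spinConfig S i : ℤ) = if i ∈ S then -1 else 1 :=
  apply_ite Subtype.val _ _ _

variable [Fintype ι]

def spinEquiv : (ι → ({-1, 1} : Finset ℤ)) ≃ Finset ι where
  toFun σ := univ.filter fun i => (σ i : ℤ) = -1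
  invFun := spinConfig
  left_inv σ := funext fun i => by
    rcases mem_insert.1 (σ i).2 with h | h <;> simp_all [spinConfig, Subtype.ext_iff]
  right_inv S := by ext i; simp [spinConfig_val]

lemma exp_coupling_spinConfig (J : ι → ι → ℝ) (S : Finset ι) :
    Complex.exp (∑ i, ∑ j, J i j * ((spinConfig S i : ℤ) : ℝ) * ((spinConfig S j : ℤ) : ℝ) : ℝ) =
      Complex.exp (∑ i, ∑ j, J i j : ℝ) *
        cutWeight (fun e => Real.exp (-2 * J e.1 e.2)) univ S := by
  have hpair : ∀ i j,
      Complex.exp (J i j * ((spinConfig S i : ℤ) : ℂ) * ((spinConfig S j : ℤ) : ℂ)) =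
        Complex.exp (J i j) * if (i ∈ S ↔ j ∈ S) then 1 else Complex.exp (-2 * J i j) := by
    intro i j
    by_cases hi : i ∈ S <;> by_cases hj : j ∈ S <;>
      simp [spinConfig_val, hi, hj, ← Complex.exp_add] <;> ring_nf
  rw [cutWeight, Fintype.prod_prod_type]
  push_cast
  simp only [Complex.exp_sum, hpair, prod_mul_distrib]

lemma exp_field_spinConfig (h : ι → ℂ) (S : Finset ι) :
    Complex.exp (∑ i, ((spinConfig S i : ℤ) : ℂ) * h i) =
      Complex.exp (∑ i, h i) * ∏ i ∈ S, Complex.exp (-2 * h i) := by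
  have hsite : ∀ i, Complex.exp (((spinConfig S i : ℤ) : ℂ) * h i) =
      Complex.exp (h i) * if i ∈ S then Complex.exp (-2 * h i) else 1 := by
    intro i
    by_cases hi : i ∈ S <;> simp [spinConfig_val, hi, ← Complex.exp_add]; ring_nf
  simp only [Complex.exp_sum, hsite, prod_mul_distrib, prod_ite_mem, univ_inter]

lemma ising_partition_eq_multiAffine (J : ι → ι → ℝ) (h : ι → ℂ) :
    ∑ σ : ι → ({-1, 1} : Finset ℤ),
      Complex.exp ((∑ i, ∑ j, J i j * ((σ i : ℤ) : ℝ) * ((σ j : ℤ) : ℝ) : ℝ)) *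
        Complex.exp (∑ i, ((σ i : ℤ) : ℂ) * h i) =
      Complex.exp (∑ i, ∑ j, J i j : ℝ) * Complex.exp (∑ i, h i) *
        multiAffine (cutWeight (fun e => Real.exp (-2 * J e.1 e.2)) univ)
          (fun i => Complex.exp (-2 * h i)) := by
  rw [← spinEquiv.symm.sum_comp, multiAffine, mul_sum]
  refine sum_congr rfl fun S _ => ?_
  rw [show spinEquiv.symm S = spinConfig S from rfl, exp_coupling_spinConfig,
    exp_field_spinConfig]
  ring

end Ising

theorem lee_yang_a_general (n : ℕ) (J : Fin n → Fin n → ℝ)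
    (hJ : ∀ i j, 0 ≤ J i j) (h : Fin n → ℂ) (hh : ∀ i, 0 < (h i).re) :
    ∑ σ : Fin n → ({-1, 1} : Finset ℤ),
      Complex.exp ((∑ i, ∑ j, J i j * ((σ i : ℤ) : ℝ) * ((σ j : ℤ) : ℝ) : ℝ)) *
        Complex.exp (∑ i, ((σ i : ℤ) : ℂ) * h i) ≠ 0 := by
  rw [ising_partition_eq_multiAffine]
  refine mul_ne_zero (mul_ne_zero (Complex.exp_ne_zero _) (Complex.exp_ne_zero _)) ?_
  refine multiAffine_cutWeight_ne_zero (fun _ => (Real.exp_pos _).le)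
    (fun e => Real.exp_le_one_iff.2 (by linarith [hJ e.1 e.2])) univ fun i => ?_
  rw [Complex.norm_exp, Real.exp_lt_one_iff]
  simpa using hh i

/-- **Lee–Yang theorem, part (a).** If all coupling constants `J i j` are non-negative,
then the Ising partition function
`Z(h) = ∑_{σ ∈ {-1,1}ⁿ} exp(∑_{i,j} J i j σ_i σ_j) · exp(∑_i σ_i h_i)`
does not vanish when all external fields `h i` have positive real part. -/
theorem lee_yang_a (n : ℕ) (hn : 1 ≤ n) (J : Fin n → Fin n → ℝ)
    (hJ : ∀ i j, 0 ≤ J i j) (h : Fin n → ℂ) (hh : ∀ i, 0 < (h i).re) :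
    ∑ σ : Fin n → ({-1, 1} : Finset ℤ),
      Complex.exp ((∑ i, ∑ j, J i j * ((σ i : ℤ) : ℝ) * ((σ j : ℤ) : ℝ) : ℝ)) *
        Complex.exp (∑ i, ((σ i : ℤ) : ℂ) * h i) ≠ 0 :=
  lee_yang_a_general n J hJ h hh
end

section
/- Let C₁,…,Cₙ and D₁,…,Dₙ be open circular domains in ℂ and let κ = (κ₁,…,κₙ) ∈ ℕⁿ. Then there exist Möbius transformations φ_i(ζ) = (a_iζ + b_i)/(c_iζ + d_i) with a_i d_i − b_i c_i = 1 for 1 ≤ i ≤ n, such that the invertible linear transformation Φ_κ : ℂ_κ[z₁,…,zₙ] → ℂ_κ[z₁,…,zₙ] defined by Φ_κ(f)(z₁,…,zₙ) = (c₁z₁+d₁)^{κ₁} ⋯ (cₙzₙ+dₙ)^{κₙ} · f(φ₁(z₁),…,φₙ(zₙ)) restricts to a bijection between 𝒩_κ(C₁,…,Cₙ) and 𝒩_κ(D₁,…,Dₙ). -/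
open MvPolynomial

/-- An open circular domain in `ℂ`: an open disc, the open exterior of a closed disc,
or an open half-plane. -/
def IsCircularDomain (C : Set ℂ) : Prop :=
  (∃ w r, 0 < r ∧ C = Metric.ball w r) ∨
  (∃ w r, 0 < r ∧ C = (Metric.closedBall w r)ᶜ) ∨
  (∃ a b : ℂ, a ≠ 0 ∧ C = {z : ℂ | 0 < (a * z + b).im})

/-- `f` is `C₁ × ⋯ × Cₙ`-stable: it does not vanish on `C₁ × ⋯ × Cₙ`. -/
def StableOn {n : ℕ} (Cs : Fin n → Set ℂ) (f : MvPolynomial (Fin n) ℂ) : Prop :=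
  ∀ z : Fin n → ℂ, (∀ i, z i ∈ Cs i) → eval z f ≠ 0

/-- The set `𝒩_κ(C₁,…,Cₙ)` of `C₁ × ⋯ × Cₙ`-stable polynomials in `ℂ_κ[z₁,…,zₙ]` whose
degree in `z_j` equals `κ_j` whenever `C_j` is non-convex. -/
def NSet {n : ℕ} (κ : Fin n →₀ ℕ) (Cs : Fin n → Set ℂ) :
    Set (MvPolynomial (Fin n) ℂ) :=
  {f | (∀ i, f.degreeOf i ≤ κ i) ∧ StableOn Cs f ∧
    ∀ j, ¬ Convex ℝ (Cs j) → f.degreeOf j = κ j}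

/-- The transformation
`Φ_κ(f)(z) = ∏_i (c_i z_i + d_i)^{κ_i} · f(φ₁(z₁),…,φₙ(zₙ))` associated with the Möbius
transformations `φ_i(ζ) = (a_i ζ + b_i)/(c_i ζ + d_i)`; on `ℂ_κ[z₁,…,zₙ]` it is given
by the polynomial formula
`∑_α coeff(α,f) ∏_i (a_i z_i + b_i)^{α_i} (c_i z_i + d_i)^{κ_i − α_i}`. -/
noncomputable def moebiusMap {n : ℕ} (a b c d : Fin n → ℂ) (κ : Fin n →₀ ℕ)
    (f : MvPolynomial (Fin n) ℂ) : MvPolynomial (Fin n) ℂ :=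
  ∑ α ∈ f.support,
    C (f.coeff α) *
      ∏ i, (C (a i) * X i + C (b i)) ^ (α i) * (C (c i) * X i + C (d i)) ^ (κ i - α i)

/-!
Completing the exterior of a disc by `∞`, every open circular domain `C` becomes an open disc `Ĉ`
of the Riemann sphere, the image of the upper half-plane under an element of `SL(2, ℂ)`; hence
there are `φ_i ∈ SL(2, ℂ)` with `φ_i(D̂_i) = Ĉ_i`.

`Φ_κ(f)(z)` is the multi-homogenization of `f` evaluated at the points `φ_i(z_i) ∈ Ĉ_i`, and the
top coefficient of `Φ_κ(f)` in `z_j` is the same homogenization with `φ_j(∞) ∈ Ĉ_j` in place of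
`φ_j(z_j)`. As `Φ_κ` is multiplicative in `φ`, the coordinates may be changed one at a time, so at
most one of these points, say the `j`-th, is `∞`; then `C_j` is the exterior of a disc,
`deg_{z_j} f = κ_j`, and the value is the leading coefficient of `f` in `z_j` at points of the
other domains. It does not vanish by a Hurwitz-type argument: the roots of `t ↦ f(…, t, …)` stay
in the closed disc complementary to `C_j`, so all coefficients are bounded by a multiple of the
leading one. The same reasoning for `φ⁻¹`, whose map inverts `Φ_κ`, gives the bijection.
-/

open Matrix Filter Topology
open scoped MatrixGroups

theorem MvPolynomial.eq_of_eval_eq_of_eval_ne_zero {σ R : Type*} [CommRing R] [IsDomain R]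
    [Infinite R] {p q h : MvPolynomial σ R} (hh : h ≠ 0)
    (hpq : ∀ z, eval z h ≠ 0 → eval z p = eval z q) : p = q := by
  have : (p - q) * h = 0 := MvPolynomial.funext fun z => by
    by_cases hz : eval z h = 0
    · simp [hz]
    · simp [hpq z hz]
  exact sub_eq_zero.mp ((mul_eq_zero.mp this).resolve_right hh)

theorem MvPolynomial.C_mul_X_add_C_ne_zero {σ R : Type*} [CommRing R] (i : σ) {c d : R}
    (hcd : c ≠ 0 ∨ d ≠ 0) : C c * X i + C d ≠ 0 := by
  intro h
  have h₀ := congrArg (eval 0) h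
  have h₁ := congrArg (eval 1) h
  simp only [eval_add, eval_mul, eval_C, eval_X, Pi.zero_apply, Pi.one_apply, map_zero,
    mul_zero, zero_add, mul_one] at h₀ h₁
  rw [h₀, add_zero] at h₁
  exact hcd.elim (· h₁) (· h₀)

theorem Polynomial.C_mul_X_add_C_ne_zero {R : Type*} [Semiring R] {c d : R}
    (hcd : c ≠ 0 ∨ d ≠ 0) : C c * X + C d ≠ 0 := by
  intro h
  have h₀ := congrArg (coeff · 0) h
  have h₁ := congrArg (coeff · 1) h
  simp only [coeff_add, mul_coeff_zero, coeff_C_zero, coeff_X_zero, mul_zero, zero_add,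
    coeff_zero, coeff_mul_X, coeff_C_succ, add_zero] at h₀ h₁
  exact hcd.elim (· h₁) (· h₀)

theorem MvPolynomial.degreeOf_linear_pow_le {σ R : Type*} [CommSemiring R] [DecidableEq σ]
    (i l : σ) (a b : R) (p : ℕ) :
    degreeOf i ((C a * X l + C b) ^ p) ≤ if l = i then p else 0 := by
  have hlin : degreeOf i (C a * X l + C b) ≤ if l = i then 1 else 0 := by
    refine (degreeOf_add_le _ _ _).trans (max_le ((degreeOf_C_mul_le _ _ _).trans ?_) (by simp))
    rcases subsingleton_or_nontrivial R with hR | hR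
    · simp [Subsingleton.elim (X l : MvPolynomial σ R) 0]
    · simp [degreeOf_X, eq_comm]
  refine (degreeOf_pow_le _ _ _).trans ?_
  split_ifs at hlin ⊢ <;> nlinarith

theorem Matrix.SpecialLinearGroup.fin_two_row_one_ne_zero {R : Type*} [CommRing R] [Nontrivial R]
    (M : SL(2, R)) : M 1 0 ≠ 0 ∨ M 1 1 ≠ 0 := by
  by_contra! h
  have := M.det_coe
  rw [det_fin_two, h.1, h.2] at this
  simp at this

theorem fin_two_eq_smul_affine {K : Type*} [Field K] {x : Fin 2 → K} (hx : x 1 ≠ 0) :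
    ![x 0 / x 1, 1] = (x 1)⁻¹ • x := by
  ext i
  fin_cases i <;> simp [div_eq_inv_mul, hx]

namespace MvPolynomial

variable {σ R : Type*} [DecidableEq σ] [CommSemiring R]

noncomputable def polynomialIn (j : σ) (f : MvPolynomial σ R) :
    Polynomial (MvPolynomial {i // i ≠ j} R) :=
  optionEquivLeft R _ (rename (Equiv.optionSubtypeNe j).symm f)

noncomputable def slice (j : σ) (z : σ → R) (f : MvPolynomial σ R) : Polynomial R :=
  (polynomialIn j f).map (eval fun i : {i // i ≠ j} => z i)

variable {j : σ} {f : MvPolynomial σ R}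

theorem natDegree_polynomialIn : (polynomialIn j f).natDegree = degreeOf j f :=
  (degreeOf_eq_natDegree j f).symm

theorem eval_slice (z : σ → R) (t : R) :
    (slice j z f).eval t = eval (Function.update z j t) f := by
  rw [slice, polynomialIn, ← optionEquivLeft_elim_eval, eval_rename]
  congr 2
  ext i
  by_cases h : i = j
  · subst h; simp
  · simp [Equiv.optionSubtypeNe_symm_of_ne h, h]

theorem natDegree_slice_le (z : σ → R) : (slice j z f).natDegree ≤ degreeOf j f :=
  natDegree_polynomialIn (f := f) ▸ Polynomial.natDegree_map_le

theorem coeff_slice_degreeOf (z : σ → R) :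
    (slice j z f).coeff (degreeOf j f) =
      eval (fun i : {i // i ≠ j} => z i) (polynomialIn j f).leadingCoeff := by
  rw [slice, Polynomial.coeff_map, Polynomial.leadingCoeff, natDegree_polynomialIn]

end MvPolynomial

theorem MvPolynomial.frequently_eval_ne_zero {σ : Type*} [Fintype σ] {g : MvPolynomial σ ℂ}
    (hg : g ≠ 0) (y₀ : σ → ℂ) : ∃ᶠ y in 𝓝 y₀, eval y g ≠ 0 := by
  refine fun hzero => hg (MvPolynomial.funext fun y => ?_)
  have := (AnalyticOnNhd.eval_mvPolynomial g).eqOn_zero_of_preconnected_of_eventuallyEq_zero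
    isPreconnected_univ (Set.mem_univ y₀) (by simpa [Filter.EventuallyEq] using hzero)
  simpa using this (Set.mem_univ y)

namespace Polynomial

theorem norm_coeff_le_of_roots_le {K : Type*} [NormedField K] [IsAlgClosed K]
    {p : Polynomial K} {B : ℝ} (h : ∀ z ∈ p.roots, ‖z‖ ≤ B) (k : ℕ) :
    ‖p.coeff k‖ ≤ ‖p.leadingCoeff‖ * (B ^ (p.natDegree - k) * p.natDegree.choose k) := by
  rcases eq_or_ne p 0 with rfl | hp
  · simp
  have hlc : p.leadingCoeff ≠ 0 := leadingCoeff_ne_zero.mpr hp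
  set q := C p.leadingCoeff⁻¹ * p
  have hq : q.Monic := monic_C_mul_of_mul_leadingCoeff_eq_one (inv_mul_cancel₀ hlc)
  have hbound := coeff_le_of_roots_le (f := RingHom.id K) k hq (IsAlgClosed.splits _)
    (by simpa [q, roots_C_mul _ (inv_ne_zero hlc)] using h)
  rw [map_id, natDegree_C_mul (inv_ne_zero hlc)] at hbound
  have hcoeff : p.coeff k = p.leadingCoeff * q.coeff k := by
    rw [coeff_C_mul, mul_inv_cancel_left₀ hlc]
  rw [hcoeff, norm_mul]
  exact mul_le_mul_of_nonneg_left hbound (norm_nonneg _)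

variable {K : Type*} [Field K]

theorem eval_homogenize_of_eq_zero (p : Polynomial K) (n : ℕ) {x : Fin 2 → K} (hx : x 1 = 0) :
    MvPolynomial.eval x (p.homogenize n) = p.coeff n * x 0 ^ n := by
  rw [homogenize, map_sum, Finset.Nat.sum_antidiagonal_eq_sum_range_succ_mk,
    Finset.sum_range_succ, Finset.sum_eq_zero]
  · simp [MvPolynomial.eval_monomial, Finsupp.prod_fintype]
  · intro k hk
    have : n - k ≠ 0 := by have := Finset.mem_range.mp hk; omega
    simp [MvPolynomial.eval_monomial, Finsupp.prod_fintype, hx, this]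

/-- For `M = !![a, b; c, d]` and `natDegree p ≤ κ`, this is
`(c X + d) ^ κ * p ((a X + b) / (c X + d))`. -/
noncomputable def moebius (M : Matrix (Fin 2) (Fin 2) K) (κ : ℕ) (p : Polynomial K) :
    Polynomial K :=
  MvPolynomial.aeval (fun k => C (M k 0) * X + C (M k 1)) (p.homogenize κ)

theorem eval_moebius (M : Matrix (Fin 2) (Fin 2) K) (κ : ℕ) (p : Polynomial K) (t : K) :
    (p.moebius M κ).eval t = MvPolynomial.eval (M *ᵥ ![t, 1]) (p.homogenize κ) := by
  rw [moebius, MvPolynomial.aeval_def, ← coe_evalRingHom, MvPolynomial.eval₂_comp_left]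
  congr 1
  · ext; simp
  · funext k
    fin_cases k <;> simp

theorem coeff_moebius_self (M : Matrix (Fin 2) (Fin 2) K) (κ : ℕ) (p : Polynomial K) :
    (p.moebius M κ).coeff κ = MvPolynomial.eval (M *ᵥ ![1, 0]) (p.homogenize κ) := by
  have hdeg : ∀ k m, ((C (M k 0) * X + C (M k 1)) ^ m).natDegree ≤ m := fun k m =>
    (natDegree_pow_le_of_le m natDegree_linear_le).trans_eq (mul_one m)
  have htop : ∀ k m, ((C (M k 0) * X + C (M k 1)) ^ m).coeff m = M k 0 ^ m := fun k m => by
    simpa using coeff_pow_of_natDegree_le (m := m) (natDegree_linear_le (a := M k 0))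
  simp only [moebius, homogenize, map_sum, finsetSum_coeff, MvPolynomial.aeval_monomial,
    MvPolynomial.eval_monomial]
  refine Finset.sum_congr rfl fun kl hkl => ?_
  rw [Finset.HasAntidiagonal.mem_antidiagonal] at hkl
  simp only [Finsupp.prod_fintype _ _ (fun _ => pow_zero _), Fin.prod_univ_two,
    Finsupp.update_apply, Finsupp.single_apply, if_true,
    show ((0 : Fin 2) = 1) = False from by decide, if_false, algebraMap_apply,
    Algebra.algebraMap_self, RingHom.id_apply, coeff_C_mul]
  rw [← hkl, coeff_mul_add_eq_of_natDegree_le (hdeg 0 _) (hdeg 1 _), htop, htop]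
  simp

end Polynomial

/-- Bounded roots bound all coefficients by a multiple of the leading one; by density and
continuity this persists at a zero of the leading coefficient, where the whole polynomial would
then vanish. -/
theorem eval_leadingCoeff_ne_zero_of_roots_bounded {σ : Type*} [Fintype σ]
    {P : Polynomial (MvPolynomial σ ℂ)} {U : Set (σ → ℂ)} (hU : IsOpen U) {R : ℝ}
    (hP : ∀ y ∈ U, ∀ t : ℂ, R < ‖t‖ → (P.map (eval y)).eval t ≠ 0) {y₀ : σ → ℂ}
    (hy₀ : y₀ ∈ U) : eval y₀ P.leadingCoeff ≠ 0 := by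
  have hlarge : R < ‖((|R| + 1 : ℝ) : ℂ)‖ := by
    rw [Complex.norm_real, Real.norm_of_nonneg (by positivity)]
    linarith [le_abs_self R]
  have hP0 : P ≠ 0 := by
    rintro rfl
    exact hP y₀ hy₀ _ hlarge (by simp)
  set K : ℕ → ℝ := fun k => R ^ (P.natDegree - k) * P.natDegree.choose k
  have hbound : ∀ k, ∀ y ∈ U, eval y P.leadingCoeff ≠ 0 →
      ‖eval y (P.coeff k)‖ ≤ ‖eval y P.leadingCoeff‖ * K k := by
    intro k y hy hLy
    have hdeg : (P.map (eval y)).natDegree = P.natDegree :=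
      Polynomial.natDegree_map_of_leadingCoeff_ne_zero _ hLy
    have hroots : ∀ z ∈ (P.map (eval y)).roots, ‖z‖ ≤ R := fun z hz =>
      not_lt.mp fun hzR => hP y hy z hzR (Polynomial.isRoot_of_mem_roots hz)
    have := Polynomial.norm_coeff_le_of_roots_le hroots k
    rwa [Polynomial.leadingCoeff, hdeg, Polynomial.coeff_map, Polynomial.coeff_map] at this
  have hlimit : ∀ k, ‖eval y₀ (P.coeff k)‖ ≤ ‖eval y₀ P.leadingCoeff‖ * K k := by
    intro k
    have hclosed : IsClosed {y | ‖eval y (P.coeff k)‖ ≤ ‖eval y P.leadingCoeff‖ * K k} :=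
      isClosed_le (continuous_eval _).norm ((continuous_eval _).norm.mul continuous_const)
    refine hclosed.mem_of_frequently_of_tendsto ?_ tendsto_id
    exact ((frequently_eval_ne_zero (Polynomial.leadingCoeff_ne_zero.mpr hP0) y₀).and_eventually
      (hU.mem_nhds hy₀)).mono fun y hy => hbound k y hy.2 hy.1
  intro hL
  have hmap : P.map (eval y₀) = 0 := by
    ext k
    simpa [hL] using hlimit k
  exact hP y₀ hy₀ _ hlarge (by simp [hmap])

theorem convex_halfPlane (a b : ℂ) : Convex ℝ {z : ℂ | 0 < (a * z + b).im} := by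
  have hlin : IsLinearMap ℝ fun z : ℂ => (a * z).im :=
    ⟨fun x y => by simp [mul_add], fun c x => by
      simp only [Complex.real_smul, Complex.mul_im, Complex.ofReal_re, Complex.ofReal_im, zero_mul,
        add_zero, Complex.mul_re, sub_zero, smul_eq_mul]
      ring⟩
  have hset : {z : ℂ | 0 < (a * z + b).im} = {z | -b.im < (a * z).im} := by
    ext z
    simp [neg_lt_iff_pos_add]
  rw [hset]
  exact convex_halfSpace_gt hlin _

theorem not_convex_compl_closedBall (w : ℂ) {r : ℝ} (hr : 0 ≤ r) :
    ¬ Convex ℝ (Metric.closedBall w r)ᶜ := by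
  intro h
  have hmem : ∀ s : ℝ, r < |s| → w + s ∈ (Metric.closedBall w r)ᶜ := fun s hs => by
    simpa [dist_eq_norm, Complex.norm_real] using hs
  have hmid := h.midpoint_mem (hmem (r + 1) (by rw [abs_of_pos (by linarith)]; linarith))
    (hmem (-(r + 1)) (by rw [abs_neg, abs_of_pos (by linarith)]; linarith))
  have hw : midpoint ℝ (w + ((r + 1 : ℝ) : ℂ)) (w + ((-(r + 1) : ℝ) : ℂ)) = w := by
    rw [midpoint_eq_smul_add, invOf_eq_inv]
    push_cast
    module
  rw [hw] at hmid
  simp [hr] at hmid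

namespace IsCircularDomain

variable {C : Set ℂ}

theorem isOpen (hC : IsCircularDomain C) : IsOpen C := by
  rcases hC with ⟨w, r, -, rfl⟩ | ⟨w, r, -, rfl⟩ | ⟨a, b, -, rfl⟩
  · exact Metric.isOpen_ball
  · exact Metric.isClosed_closedBall.isOpen_compl
  · exact isOpen_lt continuous_const (by fun_prop)

theorem nonempty (hC : IsCircularDomain C) : C.Nonempty := by
  rcases hC with ⟨w, r, hr, rfl⟩ | ⟨w, r, hr, rfl⟩ | ⟨a, b, ha, rfl⟩
  · exact ⟨w, Metric.mem_ball_self hr⟩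
  · refine ⟨w + (r + 1 : ℝ), ?_⟩
    have : ‖((r + 1 : ℝ) : ℂ)‖ = r + 1 := by
      rw [Complex.norm_real, Real.norm_of_nonneg (by linarith)]
    simp only [Set.mem_compl_iff, Metric.mem_closedBall, dist_eq_norm, add_sub_cancel_left, this]
    linarith
  · exact ⟨(Complex.I - b) / a, by simp only [Set.mem_ofPred_eq, mul_div_cancel₀ _ ha]; simp⟩

theorem eq_compl_closedBall_of_not_convex (hC : IsCircularDomain C) (hconv : ¬ Convex ℝ C) :
    ∃ w r, C = (Metric.closedBall w r)ᶜ := by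
  rcases hC with ⟨w, r, -, rfl⟩ | ⟨w, r, -, rfl⟩ | ⟨a, b, -, rfl⟩
  · exact absurd (convex_ball w r) hconv
  · exact ⟨w, r, rfl⟩
  · exact absurd (convex_halfPlane a b) hconv

end IsCircularDomain

/-- `MemHat C x` says that the point `(x 0 : x 1)` of `ℙ¹(ℂ)` lies in `Ĉ`: either it is finite and
in `C`, or it is `∞` and `C` is non-convex, i.e. (for circular domains) the exterior of a disc. -/
def MemHat (C : Set ℂ) (x : Fin 2 → ℂ) : Prop :=
  (x 1 ≠ 0 ∧ x 0 / x 1 ∈ C) ∨ (x 1 = 0 ∧ x 0 ≠ 0 ∧ ¬ Convex ℝ C)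

namespace MemHat

variable {C D : Set ℂ}

@[simp]
theorem affine_iff {z : ℂ} : MemHat C ![z, 1] ↔ z ∈ C := by
  simp [MemHat]

@[simp]
theorem infty_iff : MemHat C ![1, 0] ↔ ¬ Convex ℝ C := by
  simp [MemHat]

theorem smul_iff {c : ℂ} (hc : c ≠ 0) {x : Fin 2 → ℂ} : MemHat C (c • x) ↔ MemHat C x := by
  simp [MemHat, hc, mul_div_mul_left]

theorem not_convex {x : Fin 2 → ℂ} (hx : MemHat C x) (hx1 : x 1 = 0) : ¬ Convex ℝ C := by
  rcases hx with ⟨h, -⟩ | ⟨-, -, h⟩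
  exacts [absurd hx1 h, h]

theorem iff_mulVec {N : Matrix (Fin 2) (Fin 2) ℂ} (haff : ∀ z, z ∈ C ↔ MemHat D (N *ᵥ ![z, 1]))
    (hinf : ¬ Convex ℝ C ↔ MemHat D (N *ᵥ ![1, 0])) (x : Fin 2 → ℂ) :
    MemHat C x ↔ MemHat D (N *ᵥ x) := by
  by_cases hx1 : x 1 = 0
  · by_cases hx0 : x 0 = 0
    · have hx : x = 0 := by ext i; fin_cases i <;> assumption
      simp [hx, MemHat]
    have hx : x = x 0 • ![1, 0] := by ext i; fin_cases i <;> simp [hx1]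
    rw [hx, mulVec_smul, smul_iff hx0, smul_iff hx0, infty_iff, hinf]
  · have hx : x = x 1 • ![x 0 / x 1, 1] := by
      ext i; fin_cases i <;> simp [mul_div_cancel₀ _ hx1]
    rw [hx, mulVec_smul, smul_iff hx1, smul_iff hx1, affine_iff, haff]

end MemHat

theorem Polynomial.eval_homogenize_ne_zero {C : Set ℂ} {p : Polynomial ℂ} {n : ℕ}
    (hp : p.natDegree ≤ n) (hC : ∀ t ∈ C, p.eval t ≠ 0) {x : Fin 2 → ℂ} (hx : MemHat C x)
    (hinf : x 1 = 0 → p.coeff n ≠ 0) : MvPolynomial.eval x (p.homogenize n) ≠ 0 := by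
  rcases hx with ⟨hx1, hxC⟩ | ⟨hx1, hx0, -⟩
  · rw [eval_homogenize hp _ hx1]
    exact mul_ne_zero (hC _ hxC) (pow_ne_zero _ hx1)
  · rw [eval_homogenize_of_eq_zero _ _ hx1]
    exact mul_ne_zero (hinf hx1) (pow_ne_zero _ hx0)

theorem Complex.re_add_div_sub (r : ℝ) (ζ : ℂ) :
    ((r + ζ) / (r - ζ)).re = (r ^ 2 - ‖ζ‖ ^ 2) / normSq (r - ζ) := by
  rw [Complex.div_re, ← add_div, Complex.sq_norm, Complex.normSq_apply]
  congr 1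
  simp only [Complex.add_re, Complex.ofReal_re, Complex.sub_re, Complex.add_im,
    Complex.ofReal_im, zero_add, Complex.sub_im, zero_sub, mul_neg, Complex.normSq_apply]
  ring

theorem memHat_upperHalfPlane_iff {x : Fin 2 → ℂ} :
    MemHat {z : ℂ | 0 < z.im} x ↔ x 1 ≠ 0 ∧ 0 < (x 0 / x 1).im := by
  have : Convex ℝ {z : ℂ | 0 < z.im} := by simpa using convex_halfPlane 1 0
  simp [MemHat, this]

theorem memHat_upperHalfPlane_iff_norm_lt {r : ℝ} (hr : 0 < r) (ζ : ℂ) :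
    MemHat {z : ℂ | 0 < z.im} ![Complex.I * (r + ζ), r - ζ] ↔ ‖ζ‖ < r := by
  rw [memHat_upperHalfPlane_iff]
  simp only [Matrix.cons_val_zero, Matrix.cons_val_one, mul_div_assoc, Complex.I_mul_im,
    Complex.re_add_div_sub]
  by_cases hζ : (r : ℂ) - ζ = 0
  · have : ‖ζ‖ = r := by
      rw [← sub_eq_zero.mp hζ, Complex.norm_real, Real.norm_of_nonneg hr.le]
    simp [hζ, this]
  · rw [div_pos_iff_of_pos_right (Complex.normSq_pos.mpr hζ), sub_pos,
      sq_lt_sq₀ (norm_nonneg _) hr.le]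
    simp [hζ]

theorem memHat_upperHalfPlane_iff_lt_norm {r : ℝ} (hr : 0 < r) (ζ : ℂ) :
    MemHat {z : ℂ | 0 < z.im} ![Complex.I * (ζ + r), ζ - r] ↔ r < ‖ζ‖ := by
  rw [memHat_upperHalfPlane_iff]
  have hq : Complex.I * (ζ + r) / (ζ - r) = -(Complex.I * ((r + ζ) / (r - ζ))) := by
    rw [← neg_sub, div_neg, add_comm, mul_div_assoc]
  simp only [Matrix.cons_val_zero, Matrix.cons_val_one, hq, Complex.neg_im, Complex.I_mul_im,
    Complex.re_add_div_sub]
  by_cases hζ : (r : ℂ) - ζ = 0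
  · have : ‖ζ‖ = r := by
      rw [← sub_eq_zero.mp hζ, Complex.norm_real, Real.norm_of_nonneg hr.le]
    simp [hζ, this]
  · have hζ' : ζ - r ≠ 0 := fun h => hζ (by rw [← neg_sub, h, neg_zero])
    rw [neg_pos, div_lt_iff₀ (Complex.normSq_pos.mpr hζ), zero_mul, sub_neg,
      sq_lt_sq₀ hr.le (norm_nonneg _)]
    simp [hζ']

theorem exists_SL_memHat_iff_of_det_ne_zero {C D : Set ℂ} {N : Matrix (Fin 2) (Fin 2) ℂ}
    (hN : N.det ≠ 0) (h : ∀ x, MemHat C x ↔ MemHat D (N *ᵥ x)) :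
    ∃ N' : SL(2, ℂ), ∀ x, MemHat C x ↔ MemHat D (N' • x) := by
  obtain ⟨s, hs⟩ := IsAlgClosed.exists_eq_mul_self N.det
  have hs0 : s ≠ 0 := by rintro rfl; simp_all
  refine ⟨⟨s⁻¹ • N, ?_⟩, fun x => ?_⟩
  · rw [det_smul, hs, Fintype.card_fin, inv_pow]
    field_simp
  · change _ ↔ MemHat D ((s⁻¹ • N) *ᵥ x)
    rw [h x, smul_mulVec, MemHat.smul_iff (inv_ne_zero hs0)]

open Complex in
theorem IsCircularDomain.exists_SL_memHat_iff_upperHalfPlane {C : Set ℂ}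
    (hC : IsCircularDomain C) :
    ∃ N : SL(2, ℂ), ∀ x, MemHat C x ↔ MemHat {z : ℂ | 0 < z.im} (N • x) := by
  -- the Cayley transforms `i (r + ζ) / (r - ζ)` and `i (ζ + r) / (ζ - r)` of `ζ = z - w`
  rcases hC with ⟨w, r, hr, rfl⟩ | ⟨w, r, hr, rfl⟩ | ⟨a, b, ha, rfl⟩
  · refine exists_SL_memHat_iff_of_det_ne_zero (N := !![I, I * (r - w); -1, r + w]) ?_
      (MemHat.iff_mulVec (fun z => ?_) ?_)
    · rw [det_fin_two_of, show I * (r + w) - I * (r - w) * -1 = 2 * I * r by ring]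
      simp [hr.ne']
    · have : !![I, I * (r - w); -1, r + w] *ᵥ ![z, 1] = ![I * (r + (z - w)), r - (z - w)] := by
        simp only [mulVec_fin_two, of_apply, cons_val', cons_val_zero, cons_val_one, empty_val',
          cons_val_fin_one, mul_one]
        congr 1 <;> ring_nf
      rw [this, memHat_upperHalfPlane_iff_norm_lt hr, Metric.mem_ball, dist_eq_norm]
    · simp [convex_ball, memHat_upperHalfPlane_iff, div_neg]
  · refine exists_SL_memHat_iff_of_det_ne_zero (N := !![I, I * (r - w); 1, -(r + w)]) ?_
      (MemHat.iff_mulVec (fun z => ?_) ?_)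
    · rw [det_fin_two_of, show I * -(r + w) - I * (r - w) * 1 = -(2 * I * r) by ring]
      simp [hr.ne']
    · have : !![I, I * (r - w); 1, -(r + w)] *ᵥ ![z, 1] = ![I * ((z - w) + r), (z - w) - r] := by
        simp only [mulVec_fin_two, of_apply, cons_val', cons_val_zero, cons_val_one, empty_val',
          cons_val_fin_one, mul_one]
        congr 1 <;> ring_nf
      rw [this, memHat_upperHalfPlane_iff_lt_norm hr]
      simp [dist_eq_norm]
    · simp [not_convex_compl_closedBall w hr.le, memHat_upperHalfPlane_iff]
  · refine exists_SL_memHat_iff_of_det_ne_zero (N := !![a, b; 0, 1]) (by simpa [det_fin_two])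
      (MemHat.iff_mulVec (fun z => ?_) ?_)
    · have : !![a, b; 0, 1] *ᵥ ![z, 1] = ![a * z + b, 1] := by
        ext i; fin_cases i <;> simp [mul_comm]
      simp [this]
    · rw [iff_false_left (not_not.mpr (convex_halfPlane a b))]
      simp [memHat_upperHalfPlane_iff]

theorem exists_SL_memHat_iff {C D : Set ℂ} (hC : IsCircularDomain C) (hD : IsCircularDomain D) :
    ∃ M : SL(2, ℂ), ∀ x, MemHat D x ↔ MemHat C (M • x) := by
  obtain ⟨N, hN⟩ := hC.exists_SL_memHat_iff_upperHalfPlane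
  obtain ⟨N', hN'⟩ := hD.exists_SL_memHat_iff_upperHalfPlane
  refine ⟨N⁻¹ * N', fun x => ?_⟩
  rw [hN', hN, mul_smul, smul_inv_smul]

section moebiusMapSL

variable {n : ℕ}

noncomputable abbrev moebiusMapSL (M : Fin n → SL(2, ℂ)) (κ : Fin n →₀ ℕ) :
    MvPolynomial (Fin n) ℂ → MvPolynomial (Fin n) ℂ :=
  moebiusMap (fun i => M i 0 0) (fun i => M i 0 1) (fun i => M i 1 0) (fun i => M i 1 1) κ

variable {M : Fin n → SL(2, ℂ)} {κ : Fin n →₀ ℕ} {f : MvPolynomial (Fin n) ℂ}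

theorem eval_moebiusMapSL (z : Fin n → ℂ) :
    eval z (moebiusMapSL M κ f) = ∑ α ∈ f.support, coeff α f *
      ∏ i, (M i • ![z i, 1]) 0 ^ α i * (M i • ![z i, 1]) 1 ^ (κ i - α i) := by
  simp [moebiusMap, Matrix.SpecialLinearGroup.smul_def]

theorem eval_moebiusMapSL_of_ne_zero (hf : ∀ i, degreeOf i f ≤ κ i) {z : Fin n → ℂ}
    (hz : ∀ i, (M i • ![z i, 1]) 1 ≠ 0) :
    eval z (moebiusMapSL M κ f) = (∏ i, (M i • ![z i, 1]) 1 ^ κ i) *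
      eval (fun i => (M i • ![z i, 1]) 0 / (M i • ![z i, 1]) 1) f := by
  rw [eval_moebiusMapSL, eval_eq', Finset.mul_sum]
  refine Finset.sum_congr rfl fun α hα => ?_
  have hterm : ∀ i, (M i • ![z i, 1]) 0 ^ α i * (M i • ![z i, 1]) 1 ^ (κ i - α i) =
      (M i • ![z i, 1]) 1 ^ κ i * ((M i • ![z i, 1]) 0 / (M i • ![z i, 1]) 1) ^ α i := by
    intro i
    have hα : α i ≤ κ i := (monomial_le_degreeOf i hα).trans (hf i)
    rw [div_pow, ← pow_sub_mul_pow _ hα]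
    field_simp [hz i]
  simp only [hterm, Finset.prod_mul_distrib]
  ring

theorem degreeOf_moebiusMap_le (a b c d : Fin n → ℂ) (i : Fin n) {m : ℕ}
    (hm : ∀ α ∈ f.support, α i + (if c i = 0 then 0 else κ i - α i) ≤ m) :
    degreeOf i (moebiusMap a b c d κ f) ≤ m := by
  refine (degreeOf_sum_le _ _ _).trans (Finset.sup_le fun α hα => ?_)
  refine (degreeOf_C_mul_le _ _ _).trans ((degreeOf_prod_le _ _ _).trans ?_)
  refine le_trans ?_ (hm α hα)
  calc _ ≤ ∑ l, if l = i then α i + (if c i = 0 then 0 else κ i - α i) else 0 := by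
        refine Finset.sum_le_sum fun l _ => (degreeOf_mul_le _ _ _).trans ?_
        have h₁ := degreeOf_linear_pow_le i l (a l) (b l) (α l)
        by_cases hc : c l = 0
        · simp only [hc, map_zero, zero_mul, zero_add, ← map_pow, degreeOf_C, add_zero]
          split_ifs at h₁ ⊢ with hl <;> subst_vars <;> simp_all
        · have h₂ := degreeOf_linear_pow_le i l (c l) (d l) (κ l - α l)
          split_ifs at h₁ h₂ ⊢ with hl <;> subst_vars <;> simp_all [add_le_add h₁ h₂]
    _ = _ := by simp

theorem degreeOf_moebiusMapSL_le (hf : ∀ i, degreeOf i f ≤ κ i) (i : Fin n) :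
    degreeOf i (moebiusMapSL M κ f) ≤ κ i :=
  degreeOf_moebiusMap_le _ _ _ _ i fun α hα => by
    have := (monomial_le_degreeOf i hα).trans (hf i)
    split_ifs <;> omega

theorem degreeOf_moebiusMapSL_le_degreeOf {i : Fin n} (hMi : M i 1 0 = 0) :
    degreeOf i (moebiusMapSL M κ f) ≤ degreeOf i f :=
  degreeOf_moebiusMap_le _ _ _ _ i fun α hα => by simpa [hMi] using monomial_le_degreeOf i hα

theorem moebiusMapSL_one : moebiusMapSL (1 : Fin n → SL(2, ℂ)) κ f = f := by
  conv_rhs => rw [f.as_sum]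
  refine Finset.sum_congr rfl fun α _ => ?_
  simp [monomial_eq, Finsupp.prod_fintype]

theorem moebiusMapSL_moebiusMapSL (A B : Fin n → SL(2, ℂ)) (hf : ∀ i, degreeOf i f ≤ κ i) :
    moebiusMapSL A κ (moebiusMapSL B κ f) = moebiusMapSL (B * A) κ f := by
  set h : MvPolynomial (Fin n) ℂ := ∏ i, (C (A i 1 0) * X i + C (A i 1 1)) *
    (C ((B * A) i 1 0) * X i + C ((B * A) i 1 1))
  have hh : h ≠ 0 := Finset.prod_ne_zero_iff.mpr fun i _ => mul_ne_zero
    (C_mul_X_add_C_ne_zero i (A i).fin_two_row_one_ne_zero)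
    (C_mul_X_add_C_ne_zero i ((B * A) i).fin_two_row_one_ne_zero)
  refine eq_of_eval_eq_of_eval_ne_zero hh fun z hz => ?_
  set x := fun i => A i • ![z i, 1]
  set y := fun i => (B * A) i • ![z i, 1]
  have hxy : ∀ i, x i 1 ≠ 0 ∧ y i 1 ≠ 0 := fun i => by
    have := (Finset.prod_ne_zero_iff.mp (by simpa [h] using hz)) i (Finset.mem_univ i)
    simpa [x, y, Matrix.SpecialLinearGroup.smul_def, not_or] using this
  have hBx : ∀ i, B i • ![x i 0 / x i 1, 1] = (x i 1)⁻¹ • y i := fun i => by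
    rw [fin_two_eq_smul_affine (hxy i).1, smul_comm]
    simp only [x, y, Pi.mul_apply, mul_smul]
  have hBx1 : ∀ i, (B i • ![x i 0 / x i 1, 1]) 1 ≠ 0 := fun i => by
    simp [hBx, (hxy i).1, (hxy i).2]
  rw [eval_moebiusMapSL_of_ne_zero (degreeOf_moebiusMapSL_le hf) fun i => (hxy i).1,
    eval_moebiusMapSL_of_ne_zero hf hBx1, eval_moebiusMapSL_of_ne_zero hf fun i => (hxy i).2]
  simp only [hBx, Pi.smul_apply, smul_eq_mul, mul_div_mul_left _ _ (inv_ne_zero (hxy _).1),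
    mul_pow, ← mul_assoc, ← Finset.prod_mul_distrib]
  congr 1
  refine Finset.prod_congr rfl fun i _ => ?_
  rw [← mul_pow, mul_inv_cancel₀ (hxy i).1, one_pow, one_mul]

theorem update_one_smul_affine (j : Fin n) (A : SL(2, ℂ)) (z : Fin n → ℂ) (t : ℂ) (i : Fin n) :
    Function.update (1 : Fin n → SL(2, ℂ)) j A i • ![Function.update z j t i, 1] =
      Function.update (fun i => ![z i, 1]) j (A • ![t, 1]) i := by
  by_cases hi : i = j
  · subst hi; simp
  · simp [hi]

theorem slice_moebiusMapSL_update (hf : ∀ i, degreeOf i f ≤ κ i) (j : Fin n) (A : SL(2, ℂ))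
    (z : Fin n → ℂ) :
    slice j z (moebiusMapSL (Function.update 1 j A) κ f) = (slice j z f).moebius A (κ j) := by
  refine Polynomial.eq_of_infinite_eval_eq _ _
    ((Polynomial.finite_setOfPred_isRoot (Polynomial.C_mul_X_add_C_ne_zero
      A.fin_two_row_one_ne_zero)).infinite_compl.mono fun t ht => ?_)
  set w := A • ![t, 1]
  have hw : w 1 ≠ 0 := by simpa [w, Matrix.SpecialLinearGroup.smul_def] using ht
  have hne : ∀ i, (Function.update (1 : Fin n → SL(2, ℂ)) j A i •
      ![Function.update z j t i, 1]) 1 ≠ 0 := fun i => by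
    rw [update_one_smul_affine]
    by_cases hi : i = j
    · subst hi; simpa using hw
    · simp [hi]
  rw [Set.mem_ofPred_eq, eval_slice, eval_moebiusMapSL_of_ne_zero hf hne, Polynomial.eval_moebius,
    ← Matrix.smul_eq_mulVec, ← Matrix.SpecialLinearGroup.smul_def, Polynomial.eval_homogenize
      ((natDegree_slice_le z).trans (hf j)) _ hw, eval_slice,
    Fintype.prod_eq_single j fun i hi => by simp [hi], mul_comm]
  simp only [update_one_smul_affine, Function.update_self]
  refine congrArg (fun v => eval v f * _) (funext fun i => ?_)
  by_cases hi : i = j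
  · subst hi; simp [w]
  · simp [hi]

theorem eval_moebiusMapSL_update (hf : ∀ i, degreeOf i f ≤ κ i) (j : Fin n) (A : SL(2, ℂ))
    (z : Fin n → ℂ) :
    eval z (moebiusMapSL (Function.update 1 j A) κ f) =
      eval (A • ![z j, 1]) ((slice j z f).homogenize (κ j)) := by
  conv_lhs => rw [← Function.update_eq_self j z, ← eval_slice, slice_moebiusMapSL_update hf]
  exact Polynomial.eval_moebius _ _ _ _

theorem coeff_slice_moebiusMapSL_update (hf : ∀ i, degreeOf i f ≤ κ i) (j : Fin n)
    (A : SL(2, ℂ)) (z : Fin n → ℂ) :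
    (slice j z (moebiusMapSL (Function.update 1 j A) κ f)).coeff (κ j) =
      eval (A • ![1, 0]) ((slice j z f).homogenize (κ j)) := by
  rw [slice_moebiusMapSL_update hf, Polynomial.coeff_moebius_self]
  rfl

end moebiusMapSL

section Stability

variable {n : ℕ} {κ : Fin n →₀ ℕ} {Cs : Fin n → Set ℂ} {f : MvPolynomial (Fin n) ℂ}

theorem coeff_slice_degreeOf_ne_zero (hCs : ∀ i, IsOpen (Cs i)) (hf : StableOn Cs f) {j : Fin n}
    {w : ℂ} {r : ℝ} (hj : Cs j = (Metric.closedBall w r)ᶜ) {z : Fin n → ℂ}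
    (hz : ∀ i ≠ j, z i ∈ Cs i) : (slice j z f).coeff (degreeOf j f) ≠ 0 := by
  rw [coeff_slice_degreeOf]
  refine eval_leadingCoeff_ne_zero_of_roots_bounded (U := Set.univ.pi fun i : {i // i ≠ j} => Cs i)
    (R := ‖w‖ + r) (isOpen_set_pi Set.finite_univ fun i _ => hCs i) (fun y hy t ht => ?_)
    (Set.mem_univ_pi.mpr fun i => hz i.1 i.2)
  set y' : Fin n → ℂ := fun i => if h : i = j then 0 else y ⟨i, h⟩
  have hy' : (fun i : {i // i ≠ j} => y' i) = y := funext fun i => by simp [y', i.2]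
  rw [← hy', ← slice, eval_slice]
  refine hf _ fun i => ?_
  by_cases hi : i = j
  · subst hi
    rw [Function.update_self, hj, Set.mem_compl_iff, Metric.mem_closedBall, not_le, dist_eq_norm]
    linarith [norm_sub_norm_le t w]
  · simpa [hi, y'] using Set.mem_univ_pi.mp hy ⟨i, hi⟩

theorem eval_homogenize_slice_ne_zero (hCs : ∀ i, IsCircularDomain (Cs i)) (hf : StableOn Cs f)
    {j : Fin n} {k : ℕ} (hk : degreeOf j f ≤ k) {z : Fin n → ℂ} (hz : ∀ i ≠ j, z i ∈ Cs i)
    {x : Fin 2 → ℂ} (hx : MemHat (Cs j) x) (hfull : ¬ Convex ℝ (Cs j) → degreeOf j f = k) :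
    eval x ((slice j z f).homogenize k) ≠ 0 := by
  refine Polynomial.eval_homogenize_ne_zero ((natDegree_slice_le z).trans hk) (fun t ht => ?_) hx
    fun hx1 => ?_
  · rw [eval_slice]
    refine hf _ fun i => ?_
    by_cases hi : i = j
    · subst hi; simpa using ht
    · simpa [hi] using hz i hi
  · have hconv := hx.not_convex hx1
    obtain ⟨w, r, hw⟩ := (hCs j).eq_compl_closedBall_of_not_convex hconv
    rw [← hfull hconv]
    exact coeff_slice_degreeOf_ne_zero (fun i => (hCs i).isOpen) hf hw hz

theorem degreeOf_le_degreeOf_moebiusMapSL_update (hf : ∀ i, degreeOf i f ≤ κ i) {i j : Fin n}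
    (hij : i ≠ j) (A : SL(2, ℂ)) :
    degreeOf i f ≤ degreeOf i (moebiusMapSL (Function.update 1 j A) κ f) := by
  have hinv : moebiusMapSL (Function.update 1 j A)⁻¹ κ
      (moebiusMapSL (Function.update 1 j A) κ f) = f := by
    rw [moebiusMapSL_moebiusMapSL _ _ hf, mul_inv_cancel, moebiusMapSL_one]
  conv_lhs => rw [← hinv]
  exact degreeOf_moebiusMapSL_le_degreeOf (by simp [hij])

theorem mapsTo_moebiusMapSL_update (hCs : ∀ i, IsCircularDomain (Cs i)) {j : Fin n} {D : Set ℂ}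
    {A : SL(2, ℂ)} (hA : ∀ x, MemHat D x → MemHat (Cs j) (A • x)) :
    Set.MapsTo (moebiusMapSL (Function.update 1 j A) κ) (NSet κ Cs)
      (NSet κ (Function.update Cs j D)) := by
  rintro f ⟨hdeg, hst, hfull⟩
  refine ⟨degreeOf_moebiusMapSL_le hdeg, fun z hz => ?_, fun i hi => ?_⟩
  · rw [eval_moebiusMapSL_update hdeg]
    exact eval_homogenize_slice_ne_zero hCs hst (hdeg j) (fun i hi => by simpa [hi] using hz i)
      (hA _ (MemHat.affine_iff.mpr (by simpa using hz j))) (hfull j)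
  · refine le_antisymm (degreeOf_moebiusMapSL_le hdeg i) ?_
    by_cases hij : i = j
    · subst hij
      choose z hz using fun i => (hCs i).nonempty
      have := eval_homogenize_slice_ne_zero hCs hst (hdeg i) (fun i _ => hz i)
        (hA _ (MemHat.infty_iff.mpr (by simpa using hi))) (hfull i)
      rw [← coeff_slice_moebiusMapSL_update hdeg] at this
      exact (Polynomial.le_natDegree_of_ne_zero this).trans (natDegree_slice_le z)
    · rw [Function.update_of_ne hij] at hi
      exact (hfull i hi).symm.le.trans (degreeOf_le_degreeOf_moebiusMapSL_update hdeg hij A)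

theorem mapsTo_moebiusMapSL (hCs : ∀ i, IsCircularDomain (Cs i)) {Ds : Fin n → Set ℂ}
    (hDs : ∀ i, IsCircularDomain (Ds i)) {M : Fin n → SL(2, ℂ)}
    (hM : ∀ i x, MemHat (Ds i) x → MemHat (Cs i) (M i • x)) :
    Set.MapsTo (moebiusMapSL M κ) (NSet κ Cs) (NSet κ Ds) := by
  classical
  suffices ∀ s : Finset (Fin n),
      Set.MapsTo (moebiusMapSL (s.piecewise M 1) κ) (NSet κ Cs) (NSet κ (s.piecewise Ds Cs)) by
    simpa using this Finset.univ
  intro s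
  induction s using Finset.induction_on with
  | empty => exact fun f hf => by simpa [moebiusMapSL_one] using hf
  | insert j s hj ih =>
    intro f hf
    have hstep := mapsTo_moebiusMapSL_update (κ := κ) (Cs := s.piecewise Ds Cs) (j := j)
      (D := Ds j) (A := M j) (fun i => by by_cases hi : i ∈ s <;> simp [hi, hDs i, hCs i])
      (by simpa [Finset.piecewise_eq_of_notMem _ _ _ hj] using hM j) (ih hf)
    have hM' : s.piecewise M 1 * Function.update (1 : Fin n → SL(2, ℂ)) j (M j) =
        (insert j s).piecewise M 1 := by
      ext1 i
      by_cases hi : i = j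
      · subst hi; simp [Finset.piecewise_eq_of_notMem _ _ _ hj]
      · simp [hi]
    rwa [moebiusMapSL_moebiusMapSL _ _ hf.1, hM', ← Finset.piecewise_insert] at hstep

end Stability

/-- **(Lemma 1).** For open circular domains `C₁,…,Cₙ` and `D₁,…,Dₙ` and `κ ∈ ℕⁿ` there
are Möbius transformations `φ_i = (a_i ζ + b_i)/(c_i ζ + d_i)` with `a_i d_i − b_i c_i = 1`
such that the associated invertible linear transformation
`Φ_κ : ℂ_κ[z₁,…,zₙ] → ℂ_κ[z₁,…,zₙ]` restricts to a bijection between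
`𝒩_κ(C₁,…,Cₙ)` and `𝒩_κ(D₁,…,Dₙ)`. -/
theorem moebius_bijection_between_stability_classes (n : ℕ) (κ : Fin n →₀ ℕ)
    (Cs Ds : Fin n → Set ℂ)
    (hC : ∀ i, IsCircularDomain (Cs i)) (hD : ∀ i, IsCircularDomain (Ds i)) :
    ∃ a b c d : Fin n → ℂ, (∀ i, a i * d i - b i * c i = 1) ∧
      Set.BijOn (moebiusMap a b c d κ)
        {f : MvPolynomial (Fin n) ℂ | ∀ i, f.degreeOf i ≤ κ i}
        {f : MvPolynomial (Fin n) ℂ | ∀ i, f.degreeOf i ≤ κ i} ∧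
      Set.BijOn (moebiusMap a b c d κ) (NSet κ Cs) (NSet κ Ds) := by
  choose M hM using fun i => exists_SL_memHat_iff (hC i) (hD i)
  have hleft : ∀ f : MvPolynomial (Fin n) ℂ, (∀ i, degreeOf i f ≤ κ i) →
      moebiusMapSL M⁻¹ κ (moebiusMapSL M κ f) = f := fun f hf => by
    rw [moebiusMapSL_moebiusMapSL _ _ hf, mul_inv_cancel, moebiusMapSL_one]
  have hright : ∀ f : MvPolynomial (Fin n) ℂ, (∀ i, degreeOf i f ≤ κ i) →
      moebiusMapSL M κ (moebiusMapSL M⁻¹ κ f) = f := fun f hf => by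
    rw [moebiusMapSL_moebiusMapSL _ _ hf, inv_mul_cancel, moebiusMapSL_one]
  refine ⟨fun i => M i 0 0, fun i => M i 0 1, fun i => M i 1 0, fun i => M i 1 1,
    fun i => by rw [← Matrix.det_fin_two, (M i).det_coe], ?_, ?_⟩
  · exact Set.InvOn.bijOn ⟨hleft, hright⟩ (fun f hf => degreeOf_moebiusMapSL_le hf)
      (fun f hf => degreeOf_moebiusMapSL_le hf)
  · refine Set.InvOn.bijOn ⟨fun f hf => hleft f hf.1, fun f hf => hright f hf.1⟩
      (mapsTo_moebiusMapSL hC hD fun i x => (hM i x).mp)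
      (mapsTo_moebiusMapSL hD hC fun i x hx => ?_)
    rwa [hM i, Pi.inv_apply, smul_inv_smul]
end

section
/- Let n ≥ 1, let 1 ≤ i,j ≤ n, and let J ≥ 0 be a real number. If f ∈ ℂ[z₁,…,zₙ] is ℍ_{π/2}-stable, then the polynomial cosh(J)·f + sinh(J)·(∂²f/∂z_i∂z_j) is either ℍ_{π/2}-stable or identically zero. -/
/-!
Fix `z` in the open right half-plane. In each variable `k`, the slice `y ↦ f(z[k := y])` has all
its roots in the closed left half-plane, so `∂ₖf/f = Σ 1/(z_k - ρ)` has positive real part unless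
`∂ₖf(z) = 0`. Consequently `f + t ∂ⱼf` stays stable for every `t ≥ 0`, and the same estimate for it
in the variable `i` gives `Re((∂ᵢf + t ∂ᵢ∂ⱼf)/(f + t ∂ⱼf)) ≥ 0` at `z` for all `t ≥ 0`. For
`J > 0` suppose `∂ᵢ∂ⱼf(z) = -c f(z)` with `c = coth J > 0`. Then as `t → ∞` this ratio tends to
`-c f(z)/∂ⱼf(z)`, whose real part is negative, or its real part tends to `-∞` when
`∂ⱼf(z) = 0`: a contradiction.
-/

open Polynomial in
theorem Polynomial.eval_derivative_eq_zero_or_re_div_pos {p : ℂ[X]}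
    (hp : ∀ x : ℂ, 0 < x.re → p.eval x ≠ 0) {y : ℂ} (hy : 0 < y.re) :
    p.derivative.eval y = 0 ∨ 0 < (p.derivative.eval y / p.eval y).re := by
  have hpy := hp y hy
  have hlog := (IsAlgClosed.splits p).eval_derivative_div_eval_of_ne_zero hpy
  rcases eq_or_ne p.roots 0 with hroots | hroots
  · left
    simpa [hroots, hpy] using hlog
  · right
    have hre : ∀ ρ ∈ p.roots, 0 < (1 / (y - ρ)).re := by
      intro ρ hρ
      have hρ_re : ρ.re ≤ 0 := not_lt.mp fun h => hp ρ h (isRoot_of_mem_roots hρ)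
      have hsub : 0 < (y - ρ).re := by rw [Complex.sub_re]; linarith
      rw [one_div, Complex.inv_re]
      exact div_pos hsub (Complex.normSq_pos.mpr fun h => by simp [h] at hsub)
    have hsum := map_multiset_sum Complex.reAddGroupHom (p.roots.map fun ρ => 1 / (y - ρ))
    simp only [Complex.coe_reAddGroupHom] at hsum
    rw [hlog, hsum]
    simpa using Multiset.sum_lt_sum_of_nonempty hroots hre

theorem exists_nonneg_quadratic_neg {A B C : ℝ} (hA : 0 ≤ A) (h : 0 < A ∨ B < 0) :
    ∃ t, 0 ≤ t ∧ C + B * t - A * t ^ 2 < 0 := by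
  rcases h with hApos | hB
  · refine ⟨(|B| + |C|) / A + 1, by positivity, ?_⟩
    set t := (|B| + |C|) / A + 1
    have ht : A * t = |B| + |C| + A := by simp only [t]; field_simp
    nlinarith [le_abs_self B, le_abs_self C, neg_abs_le B, abs_nonneg B, abs_nonneg C]
  · refine ⟨(|C| + 1) / -B, div_nonneg (by positivity) (by linarith), ?_⟩
    have : B * ((|C| + 1) / -B) = -(|C| + 1) := by field_simp [hB.ne]
    nlinarith [le_abs_self C, sq_nonneg ((|C| + 1) / -B)]

theorem Complex.re_mul_re_add_im_mul_im_nonneg_of_re_div_nonneg {w v : ℂ}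
    (h : 0 ≤ (w / v).re) : 0 ≤ w.re * v.re + w.im * v.im := by
  rcases eq_or_ne v 0 with rfl | hv
  · simp
  · rw [Complex.div_re, ← add_div] at h
    simpa [(Complex.normSq_pos.mpr hv).ne'] using mul_nonneg h (Complex.normSq_nonneg v)

namespace MvPolynomial

variable {σ : Type*}

def IsRightHalfPlaneStable (f : MvPolynomial σ ℂ) : Prop :=
  ∀ z : σ → ℂ, (∀ k, 0 < (z k).re) → eval z f ≠ 0

variable [DecidableEq σ]

noncomputable def sliceAt (k : σ) (z : σ → ℂ) : MvPolynomial σ ℂ →ₐ[ℂ] Polynomial ℂ :=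
  aeval (Function.update (fun l => Polynomial.C (z l)) k Polynomial.X)

theorem eval_sliceAt (k : σ) (z : σ → ℂ) (f : MvPolynomial σ ℂ) (t : ℂ) :
    (sliceAt k z f).eval t = eval (Function.update z k t) f := by
  have hpoint : (fun l => Polynomial.aeval t (Function.update (fun l => Polynomial.C (z l)) k
      Polynomial.X l)) = Function.update z k t := by
    funext l
    rcases eq_or_ne l k with rfl | hl <;> simp [*]
  rw [← Polynomial.coe_aeval_eq_eval, sliceAt, comp_aeval_apply, hpoint]
  rfl

theorem sliceAt_pderiv (k : σ) (z : σ → ℂ) (f : MvPolynomial σ ℂ) :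
    sliceAt k z (pderiv k f) = Polynomial.derivative (sliceAt k z f) := by
  induction f using MvPolynomial.induction_on with
  | C a => simp [sliceAt]
  | add p q hp hq => simp [hp, hq]
  | mul_X p l h =>
    simp only [Derivation.leibniz, pderiv_X, smul_eq_mul, map_add, map_mul, h,
      Polynomial.derivative_mul]
    rcases eq_or_ne l k with rfl | hl
    · simp only [sliceAt, Pi.single_eq_same, map_one, mul_one, aeval_X, Function.update_self,
        Polynomial.derivative_X]
      ring
    · simp only [sliceAt, hl, Pi.single_eq_of_ne, ne_eq, not_false_eq_true, map_zero, mul_zero,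
        aeval_X, Function.update_of_ne, zero_add, Polynomial.derivative_C, add_zero]
      ring

namespace IsRightHalfPlaneStable

variable {f : MvPolynomial σ ℂ}

theorem eval_pderiv_eq_zero_or_re_div_pos (hf : IsRightHalfPlaneStable f) (k : σ)
    {z : σ → ℂ} (hz : ∀ l, 0 < (z l).re) :
    eval z (pderiv k f) = 0 ∨ 0 < (eval z (pderiv k f) / eval z f).re := by
  have hslice : ∀ x : ℂ, 0 < x.re → (sliceAt k z f).eval x ≠ 0 := by
    intro x hx
    rw [eval_sliceAt]
    refine hf _ fun l => ?_
    rcases eq_or_ne l k with rfl | hl <;> simp [*]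
  simpa [← sliceAt_pderiv, eval_sliceAt] using
    Polynomial.eval_derivative_eq_zero_or_re_div_pos hslice (hz k)

theorem re_eval_pderiv_div_nonneg (hf : IsRightHalfPlaneStable f) (k : σ)
    {z : σ → ℂ} (hz : ∀ l, 0 < (z l).re) :
    0 ≤ (eval z (pderiv k f) / eval z f).re := by
  rcases hf.eval_pderiv_eq_zero_or_re_div_pos k hz with h | h
  · simp [h]
  · exact h.le

theorem add_C_mul_pderiv (hf : IsRightHalfPlaneStable f) {t : ℝ} (ht : 0 ≤ t) (k : σ) :
    IsRightHalfPlaneStable (f + C (t : ℂ) * pderiv k f) := by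
  intro z hz
  have hfz := hf z hz
  simp only [map_add, map_mul, eval_C]
  rcases hf.eval_pderiv_eq_zero_or_re_div_pos k hz with h | h
  · simpa [h] using hfz
  · have hfactor : eval z f + t * eval z (pderiv k f)
        = eval z f * (1 + t * (eval z (pderiv k f) / eval z f)) := by
      field_simp
    have hre : 0 < (1 + t * (eval z (pderiv k f) / eval z f)).re := by
      simp only [Complex.add_re, Complex.one_re, Complex.re_ofReal_mul]
      positivity
    rw [hfactor]
    exact mul_ne_zero hfz fun h0 => by simp [h0] at hre

theorem eval_pderiv_pderiv_ne_neg_mul (hf : IsRightHalfPlaneStable f) (i j : σ) {c : ℝ}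
    (hc : 0 < c) {z : σ → ℂ} (hz : ∀ l, 0 < (z l).re) :
    eval z (pderiv i (pderiv j f)) ≠ -c * eval z f := by
  intro he
  have ha : eval z f ≠ 0 := hf z hz
  set β := eval z (pderiv i f) / eval z f
  set δ := eval z (pderiv j f) / eval z f
  have hquad : ∀ t : ℝ, 0 ≤ t →
      0 ≤ β.re + (β.re * δ.re + β.im * δ.im - c) * t - c * δ.re * t ^ 2 := by
    intro t ht
    have hg := hf.add_C_mul_pderiv ht j
    have hratio : eval z (pderiv i (f + C (t : ℂ) * pderiv j f))
        / eval z (f + C (t : ℂ) * pderiv j f) = (β - t * c) / (1 + t * δ) := by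
      simp only [map_add, map_mul, pderiv_C_mul, eval_C, he, β, δ]
      field_simp
      ring
    have h1 := Complex.re_mul_re_add_im_mul_im_nonneg_of_re_div_nonneg <| by
      simpa only [hratio] using hg.re_eval_pderiv_div_nonneg i hz
    have hexpand : (β - t * c).re * (1 + t * δ).re + (β - t * c).im * (1 + t * δ).im
        = β.re + (β.re * δ.re + β.im * δ.im - c) * t - c * δ.re * t ^ 2 := by
      simp only [Complex.sub_re, Complex.add_re, Complex.sub_im, Complex.add_im,
        Complex.re_ofReal_mul, Complex.im_ofReal_mul, Complex.one_re, Complex.one_im,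
        ← Complex.ofReal_mul, Complex.ofReal_re, Complex.ofReal_im]
      ring
    linarith
  have hδ : 0 ≤ δ.re := hf.re_eval_pderiv_div_nonneg j hz
  have hcoeff : 0 < c * δ.re ∨ β.re * δ.re + β.im * δ.im - c < 0 := by
    rcases hf.eval_pderiv_eq_zero_or_re_div_pos j hz with hd | hd
    · right
      simp [δ, hd, hc]
    · left
      positivity
  obtain ⟨t, ht, hneg⟩ := exists_nonneg_quadratic_neg (C := β.re) (mul_nonneg hc.le hδ) hcoeff
  linarith [hquad t ht]

theorem C_mul_add_C_mul_pderiv_pderiv (hf : IsRightHalfPlaneStable f) {a b : ℝ} (ha : 0 < a)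
    (hb : 0 ≤ b) (i j : σ) :
    IsRightHalfPlaneStable (C (a : ℂ) * f + C (b : ℂ) * pderiv i (pderiv j f)) := by
  intro z hz
  simp only [map_add, map_mul, eval_C]
  rcases hb.eq_or_lt with rfl | hb
  · simpa [ha.ne'] using hf z hz
  · intro h
    apply hf.eval_pderiv_pderiv_ne_neg_mul i j (div_pos ha hb) hz
    have hb' : (b : ℂ) ≠ 0 := Complex.ofReal_ne_zero.mpr hb.ne'
    rw [Complex.ofReal_div]
    field_simp
    linear_combination h

end IsRightHalfPlaneStable

end MvPolynomial

open MvPolynomial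

theorem cosh_sinh_pderiv_preserves_right_halfplane_stability_general
    (n : ℕ) (i j : Fin n) (J : ℝ) (hJ : 0 ≤ J)
    (f : MvPolynomial (Fin n) ℂ)
    (hf : ∀ z : Fin n → ℂ, (∀ k, 0 < (z k).re) → eval z f ≠ 0) :
    (C ((Real.cosh J : ℝ) : ℂ) * f + C ((Real.sinh J : ℝ) : ℂ) * pderiv i (pderiv j f)) = 0 ∨
      ∀ z : Fin n → ℂ, (∀ k, 0 < (z k).re) →
        eval z (C ((Real.cosh J : ℝ) : ℂ) * f
          + C ((Real.sinh J : ℝ) : ℂ) * pderiv i (pderiv j f)) ≠ 0 :=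
  Or.inr <| IsRightHalfPlaneStable.C_mul_add_C_mul_pderiv_pderiv hf (Real.cosh_pos J)
    (Real.sinh_nonneg_iff.mpr hJ) i j

/-- The key step in the proof of the Lee–Yang theorem: for `J ≥ 0` the linear operator
`cosh(J) + sinh(J) ∂²/∂z_i∂z_j` preserves stability with respect to the open right
half-plane `ℍ_{π/2} = {ζ : Re ζ > 0}`. -/
theorem cosh_sinh_pderiv_preserves_right_halfplane_stability
    (n : ℕ) (hn : 1 ≤ n) (i j : Fin n) (J : ℝ) (hJ : 0 ≤ J)
    (f : MvPolynomial (Fin n) ℂ)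
    (hf : ∀ z : Fin n → ℂ, (∀ k, 0 < (z k).re) → eval z f ≠ 0) :
    (C ((Real.cosh J : ℝ) : ℂ) * f + C ((Real.sinh J : ℝ) : ℂ) * pderiv i (pderiv j f)) = 0 ∨
      ∀ z : Fin n → ℂ, (∀ k, 0 < (z k).re) →
        eval z (C ((Real.cosh J : ℝ) : ℂ) * f
          + C ((Real.sinh J : ℝ) : ℂ) * pderiv i (pderiv j f)) ≠ 0 :=
  cosh_sinh_pderiv_preserves_right_halfplane_stability_general n i j J hJ f hf
end

section
/- Let n ≥ 2 and let f ∈ ℂ[z₁,…,zₙ] have degree at most 1 in each of z₁ and z₂, so that f(z₁,…,zₙ) = a(z₃,…,zₙ) + b(z₃,…,zₙ)z₁ + c(z₃,…,zₙ)z₂ + d(z₃,…,zₙ)z₁z₂ for unique polynomials a,b,c,d in z₃,…,zₙ. If f is 𝔻-stable, then its Asano contraction A(f)(z₁,…,zₙ) = a(z₃,…,zₙ) + d(z₃,…,zₙ)z₁ is either 𝔻-stable or identically zero. -/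
open MvPolynomial

/-! If `A(f)` vanished at a point `z` of the polydisc, put `α, β, γ, δ` for the values of
`a, b, c, d` at `z`. On the diagonal `z₁ = z₂ = w` the polynomial `f` becomes the quadratic
`δ w² + (β + γ) w + α`, which has no root in `𝔻` by stability; its value at `w = 0` gives `α ≠ 0`,
hence `δ ≠ 0` and `α / δ = -z₁ ∈ 𝔻`. But `α / δ` is the product of the two roots of the quadratic,
so one of them lies in `𝔻`. -/

theorem exists_quadratic_root_norm_lt_one {K : Type*} [NormedField K] [IsAlgClosed K]
    {a b c : K} (ha : a ≠ 0) (hca : ‖c / a‖ < 1) :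
    ∃ x : K, ‖x‖ < 1 ∧ a * x * x + b * x + c = 0 := by
  obtain ⟨x, hx⟩ := IsAlgClosed.exists_root (.C a * .X ^ 2 + .C b * .X + .C c)
    (by rw [Polynomial.degree_quadratic ha]; decide)
  replace hx : a * x * x + b * x + c = 0 := by simpa [sq, mul_assoc] using hx
  set y := -b / a - x with hy
  have hy_root : a * y * y + b * y + c = 0 := by
    rw [hy]; field_simp; linear_combination a * hx
  have hxy : x * y = c / a := by
    rw [hy]; field_simp; linear_combination -hx
  by_contra! h
  have hx_ge : 1 ≤ ‖x‖ := not_lt.1 fun hlt => h x hlt hx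
  have hy_ge : 1 ≤ ‖y‖ := not_lt.1 fun hlt => h y hlt hy_root
  have := one_le_mul_of_one_le_of_one_le hx_ge hy_ge
  rw [← norm_mul, hxy] at this
  exact this.not_gt hca

theorem eval_update_of_forall_mem_support {σ R : Type*} [CommSemiring R] [DecidableEq σ]
    {p : MvPolynomial σ R} {i : σ} (hp : ∀ m ∈ p.support, m i = 0) (z : σ → R) (w : R) :
    eval (Function.update z i w) p = eval z p := by
  refine eval₂_congr _ _ _ fun {j m} hj hm => Function.update_of_ne ?_ w z
  rintro rfl
  exact Finsupp.mem_support_iff.mp hj (hp m (mem_support_iff.mpr hm))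

theorem eval_update_update_eq_quadratic {σ R : Type*} [CommSemiring R] [DecidableEq σ] {i j : σ}
    (hij : i ≠ j) {a b c d : MvPolynomial σ R}
    (ha : ∀ m ∈ a.support, m i = 0 ∧ m j = 0) (hb : ∀ m ∈ b.support, m i = 0 ∧ m j = 0)
    (hc : ∀ m ∈ c.support, m i = 0 ∧ m j = 0) (hd : ∀ m ∈ d.support, m i = 0 ∧ m j = 0)
    (z : σ → R) (w : R) :
    eval (Function.update (Function.update z i w) j w) (a + b * X i + c * X j + d * X i * X j) =
      eval z d * w * w + (eval z b + eval z c) * w + eval z a := by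
  have heval (p : MvPolynomial σ R) (hp : ∀ m ∈ p.support, m i = 0 ∧ m j = 0) :
      eval (Function.update (Function.update z i w) j w) p = eval z p := by
    rw [eval_update_of_forall_mem_support fun m hm => (hp m hm).2,
      eval_update_of_forall_mem_support fun m hm => (hp m hm).1]
  simp only [map_add, map_mul, eval_X, heval a ha, heval b hb, heval c hc, heval d hd,
    Function.update_self, Function.update_of_ne hij]
  ring

theorem forall_norm_update_lt {ι E : Type*} [DecidableEq ι] [Norm E] {z : ι → E} {r : ℝ}
    (hz : ∀ i, ‖z i‖ < r) {j : ι} {w : E} (hw : ‖w‖ < r) (i : ι) :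
    ‖Function.update z j w i‖ < r := by
  rw [Function.update_apply]
  split_ifs
  exacts [hw, hz i]

/-- **Asano contraction preserves `𝔻`-stability.** Let `n ≥ 2` and let
`f = a + b z₁ + c z₂ + d z₁ z₂` have degree at most 1 in each of `z₁, z₂`, where
`a, b, c, d` are polynomials in the remaining variables `z₃,…,zₙ`. If `f` is
`𝔻`-stable then its Asano contraction `A(f) = a + d z₁` is `𝔻`-stable or zero. -/
theorem asano_contraction (n : ℕ) (hn : 2 ≤ n)
    (f a b c d : MvPolynomial (Fin n) ℂ)
    (ha : ∀ m ∈ a.support, m ⟨0, by omega⟩ = 0 ∧ m ⟨1, by omega⟩ = 0)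
    (hb : ∀ m ∈ b.support, m ⟨0, by omega⟩ = 0 ∧ m ⟨1, by omega⟩ = 0)
    (hc : ∀ m ∈ c.support, m ⟨0, by omega⟩ = 0 ∧ m ⟨1, by omega⟩ = 0)
    (hd : ∀ m ∈ d.support, m ⟨0, by omega⟩ = 0 ∧ m ⟨1, by omega⟩ = 0)
    (hrep : f = a + b * X ⟨0, by omega⟩ + c * X ⟨1, by omega⟩
      + d * X ⟨0, by omega⟩ * X ⟨1, by omega⟩)
    (hf : ∀ z : Fin n → ℂ, (∀ i, ‖z i‖ < 1) → eval z f ≠ 0) :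
    (a + d * X ⟨0, by omega⟩) = 0 ∨
      ∀ z : Fin n → ℂ, (∀ i, ‖z i‖ < 1) →
        eval z (a + d * X ⟨0, by omega⟩) ≠ 0 := by
  right
  intro z hz hA
  set i₀ : Fin n := ⟨0, by omega⟩
  set i₁ : Fin n := ⟨1, by omega⟩
  have hi : i₀ ≠ i₁ := by simp [i₀, i₁, Fin.ext_iff]
  have hdiag (w : ℂ) (hw : ‖w‖ < 1) :
      eval z d * w * w + (eval z b + eval z c) * w + eval z a ≠ 0 := by
    rw [← eval_update_update_eq_quadratic hi ha hb hc hd, ← hrep]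
    exact hf _ (forall_norm_update_lt (forall_norm_update_lt hz hw) hw)
  have ha₀ : eval z a ≠ 0 := by simpa using hdiag 0 (by simp)
  have hA' : eval z a + eval z d * z i₀ = 0 := by simpa using hA
  have hd₀ : eval z d ≠ 0 := fun hd₀ => ha₀ (by simpa [hd₀] using hA')
  have hratio : ‖eval z a / eval z d‖ < 1 := by
    rw [show eval z a / eval z d = -z i₀ by field_simp; linear_combination hA', norm_neg]
    exact hz i₀
  obtain ⟨w, hw, hroot⟩ := exists_quadratic_root_norm_lt_one (b := eval z b + eval z c) hd₀ hratio
  exact hdiag w hw hroot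
end

section
/- Let f, g ∈ ℂ[z₁,…,zₙ] be multi-affine polynomials (degree at most 1 in each variable). If f and g are both 𝔻-stable, then their Hadamard–Schur product (f • g)(z) = Σ_{α ∈ {0,1}ⁿ} f^{(α)}(0) g^{(α)}(0) z^α, where f^{(α)}(0) = (∂^α f)(0), is either 𝔻-stable or identically zero. -/
/-!
Since `(∂^α f)(0) = α! · [z^α] f`, for multi-affine `f = ∑_S a_S z^S` and `g = ∑_T b_T z^T`
(sums over subsets of the variables) the product `f • g` is `∑_S a_S b_S z^S`. For `s` a set of
variables, the partial Hadamard product `Φ_s(z, z') = ∑_{S ∩ s = T ∩ s} a_S b_T z^S z'^(T \ s)`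
interpolates between `Φ_∅ = f(z) g(z')` and `Φ_univ = (f • g)(z)`. For `i ∉ s`, `Φ_s` is
multi-affine in `(z_i, z'_i)`, `A + B u + C v + D u v` say, and `Φ_(insert i s) = A + D z_i`.
So everything rests on Asano's contraction lemma: if `A + B u + C v + D u v` has no zero on
the bidisc, then neither has `A + D w` on the disc. Fixing `u`, the root in `v` lies outside the
disc, so `‖C + D u‖ ≤ ‖A + B u‖`; the parallelogram law at `u = ± r` turns this into
`‖C‖² + r² ‖D‖² ≤ ‖A‖² + r² ‖B‖²`, and adding the same inequality with `B` and `C` exchanged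
gives `‖D‖ ≤ ‖A‖`.
-/

open MvPolynomial

/-- The iterated partial derivative `∂^α = ∂^{|α|}/∂z₁^{α₁}⋯∂zₙ^{αₙ}`,
as a linear endomorphism of the polynomial ring. -/
noncomputable def pdPow {n : ℕ} (α : Fin n →₀ ℕ) :
    Module.End ℂ (MvPolynomial (Fin n) ℂ) :=
  (List.ofFn fun i : Fin n => ((pderiv i : Derivation ℂ (MvPolynomial (Fin n) ℂ)
      (MvPolynomial (Fin n) ℂ)).toLinearMap) ^ (α i)).prod

/-- The multi-index `(1,…,1)`. -/
noncomputable def onesExp (n : ℕ) : Fin n →₀ ℕ :=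
  Finsupp.equivFunOnFinite.symm fun _ => 1

/-- The Hadamard–Schur product of two multi-affine polynomials:
`(f • g)(z) = ∑_{α ∈ {0,1}ⁿ} (∂^α f)(0) (∂^α g)(0) z^α`. -/
noncomputable def hadamardSchur {n : ℕ} (f g : MvPolynomial (Fin n) ℂ) :
    MvPolynomial (Fin n) ℂ :=
  ∑ α ∈ Finset.Iic (onesExp n),
    monomial α (eval 0 (pdPow α f) * eval 0 (pdPow α g))

namespace Complex

lemma norm_le_of_forall_add_mul_ne_zero {a b : ℂ} (h : ∀ v : ℂ, ‖v‖ < 1 → a + b * v ≠ 0) :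
    ‖b‖ ≤ ‖a‖ := by
  by_contra! hlt
  have hb : b ≠ 0 := norm_pos_iff.mp ((norm_nonneg a).trans_lt hlt)
  refine h (-a / b) ?_ ?_
  · rwa [norm_div, norm_neg, div_lt_one (norm_pos_iff.mpr hb)]
  · field_simp
    ring

lemma norm_sq_add_le_of_multiaffine_ne_zero {A B C D : ℂ}
    (h : ∀ u v : ℂ, ‖u‖ < 1 → ‖v‖ < 1 → A + B * u + C * v + D * (u * v) ≠ 0)
    {r : ℝ} (hr₀ : 0 ≤ r) (hr₁ : r < 1) :
    ‖C‖ ^ 2 + r ^ 2 * ‖D‖ ^ 2 ≤ ‖A‖ ^ 2 + r ^ 2 * ‖B‖ ^ 2 := by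
  have hle : ∀ u : ℂ, ‖u‖ < 1 → ‖C + D * u‖ ≤ ‖A + B * u‖ := fun u hu =>
    norm_le_of_forall_add_mul_ne_zero fun v hv => by
      convert h u v hu hv using 1
      ring
  have hr : ‖(r : ℂ)‖ < 1 := by rwa [norm_real, Real.norm_of_nonneg hr₀]
  have hplus := hle r hr
  have hminus := hle (-r) (by rwa [norm_neg])
  simp only [mul_neg, ← sub_eq_add_neg] at hminus
  have hC := parallelogram_law_with_norm ℝ C (D * r)
  have hA := parallelogram_law_with_norm ℝ A (B * r)
  simp only [norm_mul, norm_real, Real.norm_of_nonneg hr₀] at hC hA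
  nlinarith [mul_self_le_mul_self (norm_nonneg _) hplus,
    mul_self_le_mul_self (norm_nonneg _) hminus]

theorem add_mul_ne_zero_of_multiaffine_ne_zero {A B C D : ℂ}
    (h : ∀ u v : ℂ, ‖u‖ < 1 → ‖v‖ < 1 → A + B * u + C * v + D * (u * v) ≠ 0)
    {w : ℂ} (hw : ‖w‖ < 1) : A + D * w ≠ 0 := by
  have hA : A ≠ 0 := by simpa using h 0 0 (by simp) (by simp)
  have hswap : ∀ u v : ℂ, ‖u‖ < 1 → ‖v‖ < 1 → A + C * u + B * v + D * (u * v) ≠ 0 :=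
    fun u v hu hv => by
      convert h v u hv hu using 1
      ring
  have hDA : ‖D‖ ≤ ‖A‖ := by
    refine le_of_forall_lt_imp_le_of_dense fun c hc => ?_
    rcases le_or_gt c 0 with hc₀ | hc₀
    · exact hc₀.trans (norm_nonneg A)
    have hD : 0 < ‖D‖ := hc₀.trans hc
    set r := c / ‖D‖
    have hr₀ : 0 ≤ r := by positivity
    have hr₁ : r < 1 := (div_lt_one hD).mpr hc
    have h₁ := norm_sq_add_le_of_multiaffine_ne_zero h hr₀ hr₁
    have h₂ := norm_sq_add_le_of_multiaffine_ne_zero hswap hr₀ hr₁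
    have hsq : (r * ‖D‖) ^ 2 ≤ ‖A‖ ^ 2 := by
      nlinarith [mul_nonneg (sub_nonneg.2 (pow_le_one₀ hr₀ hr₁.le : r ^ 2 ≤ 1))
        (add_nonneg (sq_nonneg ‖B‖) (sq_nonneg ‖C‖))]
    rw [div_mul_cancel₀ c hD.ne'] at hsq
    exact (pow_le_pow_iff_left₀ hc₀.le (norm_nonneg A) two_ne_zero).mp hsq
  intro h0
  have hlt : ‖D * w‖ < ‖A‖ := by
    rw [norm_mul]
    calc ‖D‖ * ‖w‖ ≤ ‖A‖ * ‖w‖ := by gcongr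
      _ < ‖A‖ := mul_lt_of_lt_one_right (norm_pos_iff.mpr hA) hw
  rw [eq_neg_of_add_eq_zero_left h0, norm_neg] at hlt
  exact hlt.false

end Complex

section Multiaffine

open Function

variable {ι : Type*} [DecidableEq ι]

lemma Finset.prod_update_eq_ite_mul {M : Type*} [CommMonoid M] (z : ι → M) (i : ι) (u : M)
    (T : Finset ι) :
    ∏ j ∈ T, update z i u j = (if i ∈ T then u else 1) * ∏ j ∈ T.erase i, z j := by
  split_ifs with h
  · rw [← Finset.mul_prod_erase T _ h, update_self]
    exact congrArg _ (Finset.prod_congr rfl fun j hj =>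
      update_of_ne (Finset.ne_of_mem_erase hj) _ _)
  · rw [Finset.erase_eq_of_notMem h, one_mul]
    exact Finset.prod_congr rfl fun j hj => update_of_ne (ne_of_mem_of_not_mem hj h) _ _

lemma Finset.toFinsupp_val_apply (S : Finset ι) (i : ι) :
    Multiset.toFinsupp S.val i = if i ∈ S then 1 else 0 :=
  Multiset.count_eq_of_nodup S.nodup

lemma Finset.inter_insert_eq_inter_insert_iff {S T s : Finset ι} {i : ι} :
    S ∩ insert i s = T ∩ insert i s ↔ S ∩ s = T ∩ s ∧ (i ∈ S ↔ i ∈ T) := by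
  simp only [Finset.ext_iff, Finset.mem_inter, Finset.mem_insert]
  grind

variable [Fintype ι] {R : Type*} [CommSemiring R]

noncomputable def multiaffineEval (a : Finset ι → R) (z : ι → R) : R :=
  ∑ S, a S * ∏ i ∈ S, z i

/-- The Hadamard product of `a` and `b` taken only in the variables of `s`; the coordinates of
`z'` on `s` are ignored. -/
noncomputable def partialHadamard (s : Finset ι) (a b : Finset ι → R) (z z' : ι → R) : R :=
  ∑ S, ∑ T, if S ∩ s = T ∩ s then a S * b T * (∏ i ∈ S, z i) * ∏ i ∈ T \ s, z' i else 0

lemma partialHadamard_empty (a b : Finset ι → R) (z z' : ι → R) :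
    partialHadamard ∅ a b z z' = multiaffineEval a z * multiaffineEval b z' := by
  simp only [partialHadamard, multiaffineEval, Finset.inter_empty, Finset.sdiff_empty, if_true,
    Finset.sum_mul_sum]
  exact Finset.sum_congr rfl fun S _ => Finset.sum_congr rfl fun T _ => by ring

lemma partialHadamard_univ (a b : Finset ι → R) (z z' : ι → R) :
    partialHadamard Finset.univ a b z z' = multiaffineEval (a * b) z := by
  simp [partialHadamard, multiaffineEval, mul_assoc,
    fun S => Finset.sdiff_eq_empty_iff_subset.2 (Finset.subset_univ S)]

lemma exists_partialHadamard_update_eq (s : Finset ι) (a b : Finset ι → R) {i : ι} (hi : i ∉ s)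
    (z z' : ι → R) :
    ∃ A B C D : R,
      (∀ u v, partialHadamard s a b (update z i u) (update z' i v)
        = A + B * u + C * v + D * (u * v)) ∧
      partialHadamard (insert i s) a b z z' = A + D * z i := by
  set X : Finset ι → Finset ι → R := fun S T => if S ∩ s = T ∩ s then
    a S * b T * (∏ j ∈ S.erase i, z j) * ∏ j ∈ (T \ s).erase i, z' j else 0
  set c : Bool → Bool → R := fun p q =>
    ∑ S, ∑ T, if decide (i ∈ S) = p ∧ decide (i ∈ T) = q then X S T else 0
  have hmem : ∀ T : Finset ι, i ∈ T \ s ↔ i ∈ T := fun T => by simp [hi]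
  refine ⟨c false false, c true false, c false true, c true true, ?_, ?_⟩
  · intro u v
    simp only [partialHadamard, Finset.prod_update_eq_ite_mul, hmem, c, Finset.sum_mul,
      ← Finset.sum_add_distrib]
    refine Finset.sum_congr rfl fun S _ => Finset.sum_congr rfl fun T _ => ?_
    by_cases hS : i ∈ S <;> by_cases hT : i ∈ T <;> by_cases h : S ∩ s = T ∩ s <;>
      simp [X, hS, hT, h] <;> ring
  · have hz : ∀ S : Finset ι, ∏ j ∈ S, z j = (if i ∈ S then z i else 1) * ∏ j ∈ S.erase i, z j :=
      fun S => by rw [← Finset.prod_update_eq_ite_mul, update_eq_self]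
    simp only [partialHadamard, Finset.inter_insert_eq_inter_insert_iff, Finset.sdiff_insert,
      c, Finset.sum_mul, ← Finset.sum_add_distrib]
    refine Finset.sum_congr rfl fun S _ => Finset.sum_congr rfl fun T _ => ?_
    rw [hz S]
    by_cases hS : i ∈ S <;> by_cases hT : i ∈ T <;> by_cases h : S ∩ s = T ∩ s <;>
      simp [X, hS, hT, h]
    ring

theorem partialHadamard_ne_zero {a b : Finset ι → ℂ}
    (ha : ∀ z : ι → ℂ, (∀ i, ‖z i‖ < 1) → multiaffineEval a z ≠ 0)
    (hb : ∀ z : ι → ℂ, (∀ i, ‖z i‖ < 1) → multiaffineEval b z ≠ 0)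
    (s : Finset ι) {z z' : ι → ℂ} (hz : ∀ i, ‖z i‖ < 1) (hz' : ∀ i, ‖z' i‖ < 1) :
    partialHadamard s a b z z' ≠ 0 := by
  induction s using Finset.induction_on generalizing z z' with
  | empty => exact partialHadamard_empty a b z z' ▸ mul_ne_zero (ha z hz) (hb z' hz')
  | insert i s hi ih =>
    obtain ⟨A, B, C, D, hupdate, hinsert⟩ := exists_partialHadamard_update_eq s a b hi z z'
    have update_mem {w : ι → ℂ} (hw : ∀ j, ‖w j‖ < 1) {u : ℂ} (hu : ‖u‖ < 1) :
        ∀ j, ‖update w i u j‖ < 1 :=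
      (forall_update_iff w fun _ x => ‖x‖ < 1).2 ⟨hu, fun j _ => hw j⟩
    have hABCD : ∀ u v : ℂ, ‖u‖ < 1 → ‖v‖ < 1 → A + B * u + C * v + D * (u * v) ≠ 0 :=
      fun u v hu hv => hupdate u v ▸ ih (update_mem hz hu) (update_mem hz' hv)
    exact hinsert ▸ Complex.add_mul_ne_zero_of_multiaffine_ne_zero hABCD (hz i)

theorem multiaffineEval_mul_ne_zero {a b : Finset ι → ℂ}
    (ha : ∀ z : ι → ℂ, (∀ i, ‖z i‖ < 1) → multiaffineEval a z ≠ 0)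
    (hb : ∀ z : ι → ℂ, (∀ i, ‖z i‖ < 1) → multiaffineEval b z ≠ 0)
    {z : ι → ℂ} (hz : ∀ i, ‖z i‖ < 1) : multiaffineEval (a * b) z ≠ 0 :=
  partialHadamard_univ a b z z ▸ partialHadamard_ne_zero ha hb Finset.univ hz hz

end Multiaffine

namespace MvPolynomial

variable {R σ : Type*} [CommSemiring R]

lemma coeff_pderiv_pow (i : σ) (k : ℕ) (p : MvPolynomial σ R) (m : σ →₀ ℕ) :
    coeff m (((pderiv i).toLinearMap ^ k : Module.End R (MvPolynomial σ R)) p)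
      = coeff (m + Finsupp.single i k) p * (m i + k).descFactorial k := by
  classical
  induction k generalizing p with
  | zero => simp
  | succ k ih =>
    rw [pow_succ, Module.End.mul_apply, ih, Derivation.coeFn_coe, coeff_pderiv,
      add_assoc, ← Finsupp.single_add, Finsupp.add_apply, Finsupp.single_eq_same,
      ← add_assoc, Nat.succ_descFactorial_succ]
    push_cast
    ring

lemma coeff_list_prod_pderiv_pow [DecidableEq σ] (e : σ → ℕ) (p : MvPolynomial σ R)
    {l : List σ} (hl : l.Nodup) (m : σ →₀ ℕ) :
    coeff m ((l.map fun i => ((pderiv i).toLinearMap ^ e i : Module.End R _)).prod p)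
      = coeff (m + ∑ i ∈ l.toFinset, Finsupp.single i (e i)) p
        * ∏ i ∈ l.toFinset, (m i + e i).descFactorial (e i) := by
  induction l generalizing m with
  | nil => simp
  | cons i l ih =>
    obtain ⟨hil, hl⟩ := List.nodup_cons.mp hl
    have hi : i ∉ l.toFinset := List.mem_toFinset.not.mpr hil
    have hm : ∀ j ∈ l.toFinset, (m + Finsupp.single i (e i)) j = m j := fun j hj => by
      rw [Finsupp.add_apply, Finsupp.single_eq_of_ne (ne_of_mem_of_not_mem hj hi), add_zero]
    rw [List.map_cons, List.prod_cons, Module.End.mul_apply, coeff_pderiv_pow, ih hl,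
      Finset.prod_congr rfl fun j hj => by rw [hm j hj], List.toFinset_cons,
      Finset.sum_insert hi, Finset.prod_insert hi, add_assoc]
    push_cast
    ring

lemma eval_monomial_toFinsupp_val [DecidableEq σ] (S : Finset σ) (c : R) (z : σ → R) :
    eval z (monomial (Multiset.toFinsupp S.val) c) = c * ∏ i ∈ S, z i := by
  rw [eval_monomial, Finsupp.prod, Multiset.toFinsupp_support, Finset.val_toFinset]
  congr 1
  exact Finset.prod_congr rfl fun i hi => by rw [Finset.toFinsupp_val_apply, if_pos hi, pow_one]

end MvPolynomial

section HadamardSchur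

variable {n : ℕ}

lemma coeff_pdPow (α m : Fin n →₀ ℕ) (p : MvPolynomial (Fin n) ℂ) :
    coeff m (pdPow α p) = coeff (m + α) p * ∏ i, (m i + α i).descFactorial (α i) := by
  rw [pdPow, List.ofFn_eq_map, coeff_list_prod_pderiv_pow _ _ (List.nodup_finRange n),
    List.toFinset_finRange, Finsupp.univ_sum_single]

lemma eval_zero_pdPow (α : Fin n →₀ ℕ) (p : MvPolynomial (Fin n) ℂ) :
    eval 0 (pdPow α p) = coeff α p * ∏ i, ((α i).factorial : ℂ) := by
  rw [eval_zero, constantCoeff_eq, coeff_pdPow, zero_add]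
  simp [Nat.descFactorial_self]

lemma le_onesExp_iff {α : Fin n →₀ ℕ} : α ≤ onesExp n ↔ ∀ i, α i ≤ 1 := Iff.rfl

lemma eval_zero_pdPow_of_le_onesExp {α : Fin n →₀ ℕ} (hα : α ≤ onesExp n)
    (p : MvPolynomial (Fin n) ℂ) : eval 0 (pdPow α p) = coeff α p := by
  rw [eval_zero_pdPow, Finset.prod_eq_one, mul_one]
  intro i _
  rw [Nat.cast_eq_one, Nat.factorial_eq_one]
  exact le_onesExp_iff.mp hα i

lemma toFinsupp_support_val_of_le_onesExp {α : Fin n →₀ ℕ} (hα : α ≤ onesExp n) :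
    Multiset.toFinsupp α.support.val = α := by
  ext i
  have := le_onesExp_iff.mp hα i
  rw [Finset.toFinsupp_val_apply]
  split_ifs with h <;> rw [Finsupp.mem_support_iff] at h <;> omega

lemma sum_Iic_onesExp_eq_sum_finset {M : Type*} [AddCommMonoid M] (F : (Fin n →₀ ℕ) → M) :
    ∑ α ∈ Finset.Iic (onesExp n), F α = ∑ S : Finset (Fin n), F (Multiset.toFinsupp S.val) := by
  refine Finset.sum_nbij' Finsupp.support (fun S => Multiset.toFinsupp S.val)
    (fun _ _ => Finset.mem_univ _) (fun S _ => ?_)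
    (fun α hα => toFinsupp_support_val_of_le_onesExp (Finset.mem_Iic.mp hα))
    (fun S _ => by rw [Multiset.toFinsupp_support, Finset.val_toFinset])
    (fun α hα => congrArg F (toFinsupp_support_val_of_le_onesExp (Finset.mem_Iic.mp hα)).symm)
  rw [Finset.mem_Iic, le_onesExp_iff]
  intro i
  rw [Finset.toFinsupp_val_apply]
  split_ifs <;> simp

lemma eval_sum_Iic_onesExp_monomial (c : (Fin n →₀ ℕ) → ℂ) (z : Fin n → ℂ) :
    eval z (∑ α ∈ Finset.Iic (onesExp n), monomial α (c α))
      = multiaffineEval (fun S => c (Multiset.toFinsupp S.val)) z := by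
  simp only [map_sum, sum_Iic_onesExp_eq_sum_finset fun α => eval z (monomial α (c α)),
    eval_monomial_toFinsupp_val, multiaffineEval]

lemma sum_Iic_onesExp_monomial_coeff {f : MvPolynomial (Fin n) ℂ} (hf : ∀ i, f.degreeOf i ≤ 1) :
    ∑ α ∈ Finset.Iic (onesExp n), monomial α (coeff α f) = f := by
  conv_rhs => rw [f.as_sum]
  refine (Finset.sum_subset (fun α hα => ?_) fun α _ hα => ?_).symm
  · exact Finset.mem_Iic.mpr fun i => (monomial_le_degreeOf i hα).trans (hf i)
  · rw [notMem_support_iff.mp hα, map_zero]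

lemma eval_eq_multiaffineEval {f : MvPolynomial (Fin n) ℂ} (hf : ∀ i, f.degreeOf i ≤ 1)
    (z : Fin n → ℂ) :
    eval z f = multiaffineEval (fun S => coeff (Multiset.toFinsupp S.val) f) z := by
  rw [← eval_sum_Iic_onesExp_monomial (coeff · f), sum_Iic_onesExp_monomial_coeff hf]

lemma hadamardSchur_eq_sum (f g : MvPolynomial (Fin n) ℂ) :
    hadamardSchur f g = ∑ α ∈ Finset.Iic (onesExp n), monomial α (coeff α f * coeff α g) :=
  Finset.sum_congr rfl fun α hα => by
    rw [eval_zero_pdPow_of_le_onesExp (Finset.mem_Iic.mp hα),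
      eval_zero_pdPow_of_le_onesExp (Finset.mem_Iic.mp hα)]

end HadamardSchur

/-- **Hinkkanen's composition theorem.** If `f` and `g` are multi-affine and `𝔻`-stable,
then their Hadamard–Schur product is `𝔻`-stable or identically zero. -/
theorem hadamard_schur_disc_stable (n : ℕ) (f g : MvPolynomial (Fin n) ℂ)
    (hfa : ∀ i, f.degreeOf i ≤ 1) (hga : ∀ i, g.degreeOf i ≤ 1)
    (hf : ∀ z : Fin n → ℂ, (∀ i, ‖z i‖ < 1) → eval z f ≠ 0)
    (hg : ∀ z : Fin n → ℂ, (∀ i, ‖z i‖ < 1) → eval z g ≠ 0) :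
    hadamardSchur f g = 0 ∨
      ∀ z : Fin n → ℂ, (∀ i, ‖z i‖ < 1) → eval z (hadamardSchur f g) ≠ 0 := by
  refine Or.inr fun z hz => ?_
  rw [hadamardSchur_eq_sum, eval_sum_Iic_onesExp_monomial]
  exact multiaffineEval_mul_ne_zero (fun w hw => eval_eq_multiaffineEval hfa w ▸ hf w hw)
    (fun w hw => eval_eq_multiaffineEval hga w ▸ hg w hw) hz
end

section
/- Let n ≥ 1 and let a_{ij} ∈ ℂ for 1 ≤ i,j ≤ n satisfy |a_{ij}| ≤ 1 and a_{ji} = conj(a_{ij}) for all i,j. Then the polynomial Σ_{S ⊆ {1,…,n}} (Π_{i∈S} z_i) · (Π_{i∈S} Π_{j∉S} a_{ij}) is 𝔻-stable, i.e., it is nonzero whenever |z_i| < 1 for all 1 ≤ i ≤ n. -/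
/-!
A multiaffine `f(z) = ∑_{T ⊆ s} d_T z^T` has the reflection `f*(z) = z^s conj (f (1 / conj z))`,
with coefficients `conj d_{s \ T}`. If `f` is `𝔻`-stable then `‖f*‖ ≤ ‖f‖` on the polydisc. For
`f = A + uB` in one variable, stability means `A ≠ 0` and `‖B‖ ≤ ‖A‖`; in general one splits off a
variable, `f = f₀ + z_j f₁`, applies induction to the stable slices `f₀ + u f₁`, and an elementary
estimate on `‖A + uB‖² - ‖A' + conj u B'‖²` transfers the inequality to `f* = f₁* + z_j f₀*`.

The Lee–Yang polynomial on `insert j s` equals `g + z_j g*` with `g(z) = P_s(z_i a_{ij})`, because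
`a_{ji} = conj a_{ij}`. By induction `g` is stable (as `‖z_i a_{ij}‖ < 1`), so `‖z_j g*‖ < ‖g‖`.
-/

open ComplexConjugate Finset

lemma quadratic_reflect_nonneg {a b a' b' k r : ℝ} (ha' : 0 ≤ a') (hb' : 0 ≤ b') (hb : 0 ≤ b)
    (hba : b ≤ a) (hk₁ : a * b - a' * b' ≤ k) (hk₂ : a' * b' - a * b ≤ k)
    (hr₀ : 0 ≤ r) (hr₁ : r ≤ 1)
    (hr : 0 ≤ a ^ 2 - a' ^ 2 + (b ^ 2 - b' ^ 2) * r ^ 2 - 2 * k * r)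
    (h₁ : 0 ≤ a ^ 2 - a' ^ 2 + (b ^ 2 - b' ^ 2) - 2 * k) :
    0 ≤ a ^ 2 - b' ^ 2 + (b ^ 2 - a' ^ 2) * r ^ 2 - 2 * k * r := by
  have hr₂ : r ^ 2 ≤ 1 := by nlinarith
  rcases le_total b' a' with hb'a' | ha'b'
  · have : 0 ≤ (a' ^ 2 - b' ^ 2) * (1 - r ^ 2) :=
      mul_nonneg (by nlinarith) (by linarith)
    linarith
  · have hsum : a' + b' ≤ a + b := by nlinarith
    have hdiff : b' - a' ≤ a - b := by nlinarith
    rcases le_total b a' with hba' | ha'b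
    · -- concave in `r`: lies above the chord from `r = 0` to `r = 1`
      have h₀ : 0 ≤ a ^ 2 - b' ^ 2 := by nlinarith
      have : 0 ≤ (a' ^ 2 - b ^ 2) * (r * (1 - r)) :=
        mul_nonneg (by nlinarith) (mul_nonneg hr₀ (by linarith))
      nlinarith
    · have hk : b ^ 2 - a' ^ 2 ≤ k := by
        nlinarith [mul_nonneg (sub_nonneg.2 ha'b) (sub_nonneg.2 ha'b')]
      -- the goal equals `h₁` plus this product
      have : 0 ≤ (1 - r) * (2 * k - (b ^ 2 - a' ^ 2) * (1 + r)) :=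
        mul_nonneg (by linarith) (by nlinarith)
      nlinarith

lemma exists_norm_eq_re_mul_eq (c : ℂ) (r : ℝ) (hr : 0 ≤ r) :
    ∃ u : ℂ, ‖u‖ = r ∧ (u * c).re = -(r * ‖c‖) := by
  refine ⟨-r * Complex.exp (-Complex.arg c * Complex.I), ?_, ?_⟩
  · rw [norm_mul, norm_neg, ← Complex.ofReal_neg, Complex.norm_exp_ofReal_mul_I,
      Complex.norm_real, Real.norm_of_nonneg hr, mul_one]
  · have hexp : Complex.exp (-c.arg * Complex.I) * Complex.exp (c.arg * Complex.I) = 1 := by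
      rw [← Complex.exp_add, neg_mul, neg_add_cancel, Complex.exp_zero]
    have : -(r : ℂ) * Complex.exp (-c.arg * Complex.I) * c = ((-(r * ‖c‖) : ℝ) : ℂ) := by
      calc -(r : ℂ) * Complex.exp (-c.arg * Complex.I) * c
          = -(r : ℂ) * Complex.exp (-c.arg * Complex.I)
              * (‖c‖ * Complex.exp (c.arg * Complex.I)) := by
            rw [Complex.norm_mul_exp_arg_mul_I]
        _ = ((-(r * ‖c‖) : ℝ) : ℂ) := by
            push_cast
            linear_combination (-(r : ℂ) * ‖c‖) * hexp
    rw [this, Complex.ofReal_re]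

lemma forall_add_mul_ne_zero_iff {A B : ℂ} :
    (∀ u : ℂ, ‖u‖ < 1 → A + u * B ≠ 0) ↔ A ≠ 0 ∧ ‖B‖ ≤ ‖A‖ := by
  constructor
  · intro h
    refine ⟨by simpa using h 0 (by simp), le_of_not_gt fun hAB => ?_⟩
    have hB : B ≠ 0 := by
      rintro rfl
      exact (norm_nonneg A).not_gt (by simpa using hAB)
    refine h (-A / B) ?_ (by field_simp; ring)
    rwa [norm_div, norm_neg, div_lt_one (norm_pos_iff.2 hB)]
  · rintro ⟨hA, hBA⟩ u hu h
    have hA' : A = -(u * B) := eq_neg_of_add_eq_zero_left h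
    refine lt_irrefl ‖A‖ ?_
    calc ‖A‖ = ‖u‖ * ‖B‖ := by rw [hA', norm_neg, norm_mul]
      _ ≤ ‖u‖ * ‖A‖ := mul_le_mul_of_nonneg_left hBA (norm_nonneg u)
      _ < ‖A‖ := mul_lt_of_lt_one_left (norm_pos_iff.2 hA) hu

lemma norm_sq_add_mul_sub (A B A' B' u : ℂ) :
    ‖A + u * B‖ ^ 2 - ‖A' + conj u * B'‖ ^ 2 = ‖A‖ ^ 2 - ‖A'‖ ^ 2
      + (‖B‖ ^ 2 - ‖B'‖ ^ 2) * ‖u‖ ^ 2 + 2 * (u * (conj A * B - A' * conj B')).re := by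
  simp only [Complex.sq_norm, Complex.normSq_apply, Complex.add_re, Complex.add_im,
    Complex.mul_re, Complex.mul_im, Complex.sub_re, Complex.sub_im, Complex.conj_re,
    Complex.conj_im]
  ring

lemma norm_sq_add_mul_sub_swap (A B A' B' v : ℂ) :
    ‖A + v * B‖ ^ 2 - ‖B' + v * A'‖ ^ 2 = ‖A‖ ^ 2 - ‖B'‖ ^ 2
      + (‖B‖ ^ 2 - ‖A'‖ ^ 2) * ‖v‖ ^ 2 + 2 * (v * (conj A * B - A' * conj B')).re := by
  simp only [Complex.sq_norm, Complex.normSq_apply, Complex.add_re, Complex.add_im,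
    Complex.mul_re, Complex.mul_im, Complex.sub_re, Complex.sub_im, Complex.conj_re,
    Complex.conj_im]
  ring

lemma norm_add_mul_swap_le {A B A' B' : ℂ} (hBA : ‖B‖ ≤ ‖A‖)
    (h : ∀ u : ℂ, ‖u‖ < 1 → ‖A' + conj u * B'‖ ≤ ‖A + u * B‖) {v : ℂ} (hv : ‖v‖ < 1) :
    ‖B' + v * A'‖ ≤ ‖A + v * B‖ := by
  set c := conj A * B - A' * conj B'
  set F : ℝ → ℝ := fun r => ‖A‖ ^ 2 - ‖A'‖ ^ 2 + (‖B‖ ^ 2 - ‖B'‖ ^ 2) * r ^ 2 - 2 * ‖c‖ * r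
  -- `F r` is the minimum of the right side of `norm_sq_add_mul_sub` over `‖u‖ = r`
  have hF : ∀ r ∈ Set.Ico (0 : ℝ) 1, 0 ≤ F r := by
    rintro r ⟨hr₀, hr₁⟩
    obtain ⟨u, rfl, hu⟩ := exists_norm_eq_re_mul_eq c r hr₀
    have := norm_sq_add_mul_sub A B A' B' u
    nlinarith [pow_le_pow_left₀ (norm_nonneg _) (h u hr₁) 2]
  have hF₁ : 0 ≤ F 1 := by
    have hcont : Continuous F := by fun_prop
    have : Set.Icc (0 : ℝ) 1 ⊆ {r | 0 ≤ F r} := by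
      rw [← closure_Ico zero_ne_one]
      exact closure_minimal hF (isClosed_le continuous_const hcont)
    exact this ⟨zero_le_one, le_rfl⟩
  have hc := abs_le.1 (abs_norm_sub_norm_le (conj A * B) (A' * conj B'))
  simp only [norm_mul, Complex.norm_conj] at hc
  have hre : -(‖v‖ * ‖c‖) ≤ (v * c).re := by
    have := Complex.abs_re_le_norm (v * c)
    rw [norm_mul] at this
    linarith [(abs_le.1 this).1]
  have key := quadratic_reflect_nonneg (norm_nonneg A') (norm_nonneg B') (norm_nonneg B) hBA
    (by linarith) (by linarith) (norm_nonneg v) hv.le (hF _ ⟨norm_nonneg v, hv⟩)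
    (by simpa [F] using hF₁)
  have := norm_sq_add_mul_sub_swap A B A' B' v
  exact pow_le_pow_iff_left₀ (norm_nonneg _) (norm_nonneg _) two_ne_zero |>.1 (by nlinarith)

namespace Multiaffine

variable {α : Type*}

noncomputable def eval (d : Finset α → ℂ) (s : Finset α) (z : α → ℂ) : ℂ :=
  ∑ T ∈ s.powerset, d T * ∏ i ∈ T, z i

def IsDiscStable (d : Finset α → ℂ) (s : Finset α) : Prop :=
  ∀ z : α → ℂ, (∀ i ∈ s, ‖z i‖ < 1) → eval d s z ≠ 0

lemma eval_empty (d : Finset α → ℂ) (z : α → ℂ) : eval d ∅ z = d ∅ := by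
  simp [eval]

lemma eval_congr {d d' : Finset α → ℂ} {s : Finset α} {z z' : α → ℂ}
    (hd : ∀ T ⊆ s, d T = d' T) (hz : ∀ i ∈ s, z i = z' i) : eval d s z = eval d' s z' :=
  sum_congr rfl fun T hT => by
    rw [mem_powerset] at hT
    rw [hd T hT, prod_congr rfl fun i hi => hz i (hT hi)]

lemma eval_add_mul (d e : Finset α → ℂ) (u : ℂ) (s : Finset α) (z : α → ℂ) :
    eval (fun T => d T + u * e T) s z = eval d s z + u * eval e s z := by
  simp only [eval, mul_sum, ← sum_add_distrib, add_mul, mul_assoc]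

lemma eval_mul_prod (d : Finset α → ℂ) (w : α → ℂ) (s : Finset α) (z : α → ℂ) :
    eval (fun T => d T * ∏ i ∈ T, w i) s z = eval d s (fun i => z i * w i) := by
  simp only [eval, prod_mul_distrib, mul_assoc, mul_comm (∏ i ∈ _, w i)]

variable [DecidableEq α]

def reflect (d : Finset α → ℂ) (s T : Finset α) : ℂ :=
  conj (d (s \ T))

lemma eval_insert (d : Finset α → ℂ) {j : α} {s : Finset α} (hj : j ∉ s) (z : α → ℂ) :
    eval d (insert j s) z = eval d s z + z j * eval (fun T => d (insert j T)) s z := by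
  rw [eval, sum_powerset_insert hj, eval, eval, mul_sum]
  congr 1
  refine sum_congr rfl fun T hT => ?_
  rw [prod_insert fun hjT => hj (mem_powerset.1 hT hjT)]
  ring

lemma reflect_add_mul (d e : Finset α → ℂ) (u : ℂ) (s : Finset α) :
    reflect (fun T => d T + u * e T) s = fun T => reflect d s T + conj u * reflect e s T := by
  ext T
  simp [reflect]

lemma eval_reflect_insert (d : Finset α → ℂ) {j : α} {s : Finset α} (hj : j ∉ s) (z : α → ℂ) :
    eval (reflect d (insert j s)) (insert j s) z
      = eval (reflect (fun T => d (insert j T)) s) s z + z j * eval (reflect d s) s z := by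
  rw [eval_insert _ hj]
  congr 1
  · refine eval_congr (fun T hT => ?_) fun _ _ => rfl
    rw [reflect, reflect, insert_sdiff_of_notMem _ fun hjT => hj (hT hjT)]
  · refine congrArg _ (eval_congr (fun T _ => ?_) fun _ _ => rfl)
    rw [reflect, reflect, insert_sdiff_insert, sdiff_insert_of_notMem hj]

lemma IsDiscStable.add_mul_insert {d : Finset α → ℂ} {j : α} {s : Finset α}
    (hd : IsDiscStable d (insert j s)) (hj : j ∉ s) {u : ℂ} (hu : ‖u‖ < 1) :
    IsDiscStable (fun T => d T + u * d (insert j T)) s := by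
  intro z hz
  have hupdate : ∀ i ∈ s, Function.update z j u i = z i :=
    fun i hi => Function.update_of_ne (ne_of_mem_of_not_mem hi hj) _ _
  have := hd (Function.update z j u) fun i hi => by
    rcases mem_insert.1 hi with rfl | hi
    · simpa using hu
    · simpa [hupdate i hi] using hz i hi
  rwa [eval_insert _ hj, Function.update_self, eval_congr (fun _ _ => rfl) hupdate,
    eval_congr (fun _ _ => rfl) hupdate, ← eval_add_mul] at this

theorem IsDiscStable.norm_eval_reflect_le {d : Finset α → ℂ} {s : Finset α}
    (hd : IsDiscStable d s) {z : α → ℂ} (hz : ∀ i ∈ s, ‖z i‖ < 1) :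
    ‖eval (reflect d s) s z‖ ≤ ‖eval d s z‖ := by
  induction s using Finset.induction_on generalizing d with
  | empty => simp [eval_empty, reflect]
  | @insert j s hj ih =>
    have hzs : ∀ i ∈ s, ‖z i‖ < 1 := fun i hi => hz i (mem_insert_of_mem hi)
    have hslice (u : ℂ) (hu : ‖u‖ < 1) := hd.add_mul_insert hj hu
    have hBA := (forall_add_mul_ne_zero_iff.1 fun u hu => by
      simpa only [eval_add_mul] using hslice u hu z hzs).2
    rw [eval_reflect_insert _ hj, eval_insert _ hj]
    refine norm_add_mul_swap_le hBA (fun u hu => ?_) (hz j (mem_insert_self j s))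
    simpa only [eval_add_mul, reflect_add_mul] using ih (hslice u hu) hzs

end Multiaffine

open Multiaffine

section LeeYang

variable {α : Type*} [DecidableEq α] {a : α → α → ℂ}

def leeYangCoeff (a : α → α → ℂ) (s S : Finset α) : ℂ :=
  ∏ i ∈ S, ∏ j ∈ s \ S, a i j

lemma leeYangCoeff_insert {j : α} {s T : Finset α} (hj : j ∉ s) (hT : T ⊆ s) :
    leeYangCoeff a (insert j s) T = leeYangCoeff a s T * ∏ i ∈ T, a i j := by
  have hjsT : j ∉ s \ T := fun h => hj (mem_sdiff.1 h).1
  simp only [leeYangCoeff, insert_sdiff_of_notMem _ fun h => hj (hT h), prod_insert hjsT,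
    prod_mul_distrib, mul_comm]

lemma leeYangCoeff_insert_insert (hsym : ∀ i j, a j i = conj (a i j)) {j : α} {s T : Finset α}
    (hj : j ∉ s) (hT : T ⊆ s) :
    leeYangCoeff a (insert j s) (insert j T)
      = reflect (fun T => leeYangCoeff a s T * ∏ i ∈ T, a i j) s T := by
  simp only [leeYangCoeff, reflect, insert_sdiff_insert, sdiff_insert_of_notMem hj,
    Finset.sdiff_sdiff_eq_self hT, prod_insert fun h => hj (hT h), map_mul, map_prod, ← hsym]
  rw [prod_comm, mul_comm]

lemma eval_leeYangCoeff_insert (hsym : ∀ i j, a j i = conj (a i j)) {j : α} {s : Finset α}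
    (hj : j ∉ s) (z : α → ℂ) :
    eval (leeYangCoeff a (insert j s)) (insert j s) z
      = eval (fun T => leeYangCoeff a s T * ∏ i ∈ T, a i j) s z
        + z j * eval (reflect (fun T => leeYangCoeff a s T * ∏ i ∈ T, a i j) s) s z := by
  rw [eval_insert _ hj,
    eval_congr (fun T hT => leeYangCoeff_insert hj hT) fun _ _ => rfl,
    eval_congr (fun T hT => leeYangCoeff_insert_insert hsym hj hT) fun _ _ => rfl]

theorem isDiscStable_leeYangCoeff (ha : ∀ i j, ‖a i j‖ ≤ 1) (hsym : ∀ i j, a j i = conj (a i j))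
    (s : Finset α) : IsDiscStable (leeYangCoeff a s) s := by
  induction s using Finset.induction_on with
  | empty => simp [IsDiscStable, eval_empty, leeYangCoeff]
  | @insert j s hj ih =>
    intro z hz
    have hg : IsDiscStable (fun T => leeYangCoeff a s T * ∏ i ∈ T, a i j) s := by
      intro w hw
      rw [eval_mul_prod]
      refine ih _ fun i hi => ?_
      calc ‖w i * a i j‖ = ‖w i‖ * ‖a i j‖ := norm_mul _ _
        _ ≤ ‖w i‖ := mul_le_of_le_one_right (norm_nonneg _) (ha i j)
        _ < 1 := hw i hi
    have hzs : ∀ i ∈ s, ‖z i‖ < 1 := fun i hi => hz i (mem_insert_of_mem hi)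
    rw [eval_leeYangCoeff_insert hsym hj]
    exact forall_add_mul_ne_zero_iff.2 ⟨hg z hzs, hg.norm_eval_reflect_le hzs⟩ _
      (hz j (mem_insert_self j s))

end LeeYang

theorem lee_yang_circle_general (n : ℕ) (a : Fin n → Fin n → ℂ)
    (ha : ∀ i j, ‖a i j‖ ≤ 1)
    (hsym : ∀ i j, a j i = starRingEnd ℂ (a i j))
    (z : Fin n → ℂ) (hz : ∀ i, ‖z i‖ < 1) :
    ∑ S : Finset (Fin n), (∏ i ∈ S, z i) * ∏ i ∈ S, ∏ j ∈ Sᶜ, a i j ≠ 0 := by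
  have hstable := isDiscStable_leeYangCoeff ha hsym univ z fun i _ => hz i
  rw [eval, powerset_univ] at hstable
  simpa only [leeYangCoeff, ← compl_eq_univ_sdiff, mul_comm] using hstable

/-- **A strong form of the Lee–Yang circle theorem.** If `|a i j| ≤ 1` and
`a j i = conj (a i j)` for all `i, j`, then the polynomial
`∑_{S ⊆ {1,…,n}} z^S ∏_{i ∈ S} ∏_{j ∉ S} a i j` is `𝔻`-stable: it does not vanish
when all `z i` lie in the open unit disc. -/
theorem lee_yang_circle (n : ℕ) (hn : 1 ≤ n) (a : Fin n → Fin n → ℂ)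
    (ha : ∀ i j, ‖a i j‖ ≤ 1)
    (hsym : ∀ i j, a j i = starRingEnd ℂ (a i j))
    (z : Fin n → ℂ) (hz : ∀ i, ‖z i‖ < 1) :
    ∑ S : Finset (Fin n), (∏ i ∈ S, z i) * ∏ i ∈ S, ∏ j ∈ Sᶜ, a i j ≠ 0 :=
  lee_yang_circle_general n a ha hsym z hz
end

section
/- Let G = (V,E) be a finite graph with V = {1,…,n} and non-negative edge weights λ_e ≥ 0 for e ∈ E, and form F_G(z,λ) = Π_{e={i,j}∈E} (1 + λ_e z_i z_j) ∈ ℂ[z₁,…,zₙ]. Then the multivariate Heilmann–Lieb matching polynomial MAP[F_G(z,λ)] is ℍ_{π/2}-stable, i.e., nonzero whenever Re(z_i) > 0 for all 1 ≤ i ≤ n. -/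
open MvPolynomial

/-- The linear operator extracting the multi-affine part of a polynomial:
if `f = ∑_α a(α) z^α` then `MAP f = ∑_{α : α_i ≤ 1 ∀ i} a(α) z^α`. -/
noncomputable def MAP {n : ℕ} (f : MvPolynomial (Fin n) ℂ) : MvPolynomial (Fin n) ℂ :=
  ∑ α ∈ f.support.filter (fun α : Fin n →₀ ℕ => ∀ i, α i ≤ 1),
    monomial α (f.coeff α)

/-! Expanding the product, `MAP` keeps exactly the monomials `∏_{e ∈ M} λ_e z_{e.1} z_{e.2}` of
the matchings `M ⊆ E`, so the polynomial is the multivariate matching polynomial `μ_A` of the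
graph induced on `A = V`. Splitting the matchings of `A` according to the edge covering a vertex
`v ∈ A` gives `μ_A = μ_{A-v} + ∑_{u ~ v} λ_{uv} z_v z_u μ_{A-v-u}`, that is
`μ_A / (z_v μ_{A-v}) = z_v⁻¹ + ∑_{u ~ v} λ_{uv} (μ_{A-v} / (z_u μ_{A-v-u}))⁻¹`.
Inversion preserves the right half-plane, so by induction on `A` all these ratios have positive
real part; in particular `μ_A ≠ 0`. -/

open Finset

lemma coeff_MAP {n : ℕ} (f : MvPolynomial (Fin n) ℂ) (α : Fin n →₀ ℕ) :
    coeff α (MAP f) = if ∀ i, α i ≤ 1 then coeff α f else 0 := by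
  classical
  simp only [MAP, coeff_sum, coeff_monomial, sum_ite_eq', mem_filter, mem_support_iff]
  split_ifs <;> tauto

lemma MAP_sum {n : ℕ} {ι : Type*} (s : Finset ι) (f : ι → MvPolynomial (Fin n) ℂ) :
    MAP (∑ i ∈ s, f i) = ∑ i ∈ s, MAP (f i) := by
  ext α
  simp only [coeff_MAP, coeff_sum]
  split_ifs <;> simp

lemma MAP_monomial {n : ℕ} (α : Fin n →₀ ℕ) (c : ℂ) :
    MAP (monomial α c) = if ∀ i, α i ≤ 1 then monomial α c else 0 := by
  ext β
  simp only [coeff_MAP, apply_ite (coeff β), coeff_monomial, coeff_zero]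
  split_ifs <;> subst_vars <;> tauto

namespace HeilmannLieb

variable {V R : Type*} [CommSemiring R]

/-- `incidence S` is the exponent of the monomial `∏_{e ∈ S} z_{e.1} z_{e.2}` (a loop counts
twice), so `IsMatching S` says that this monomial is multi-affine. -/
noncomputable def incidence (S : Finset (V × V)) : V →₀ ℕ :=
  ∑ e ∈ S, (Finsupp.single e.1 1 + Finsupp.single e.2 1)

def IsMatching (S : Finset (V × V)) : Prop := ∀ v, incidence S v ≤ 1

open Classical in
noncomputable def matchingSum (w : V × V → R) (E : Finset (V × V)) : R :=
  ∑ S ∈ E.powerset with IsMatching S, ∏ e ∈ S, w e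

lemma matchingSum_empty (w : V × V → R) : matchingSum w ∅ = 1 := by
  have : IsMatching (∅ : Finset (V × V)) := fun v => by simp [incidence]
  rw [matchingSum, powerset_empty, filter_singleton, if_pos this, sum_singleton, prod_empty]

lemma map_matchingSum {S : Type*} [CommSemiring S] (φ : R →+* S) (w : V × V → R)
    (E : Finset (V × V)) : φ (matchingSum w E) = matchingSum (φ ∘ w) E := by
  simp [matchingSum, map_sum, map_prod]

lemma prod_C_mul_X_mul_X {n : ℕ} (c : Fin n × Fin n → ℂ) (S : Finset (Fin n × Fin n)) :
    ∏ e ∈ S, (C (c e) * X e.1 * X e.2 : MvPolynomial (Fin n) ℂ)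
      = monomial (incidence S) (∏ e ∈ S, c e) := by
  simp only [C_mul_X_eq_monomial]
  simp only [X, monomial_mul, mul_one, incidence, monomial_sum_prod]

lemma MAP_prod_one_add_C_mul_X_mul_X {n : ℕ} (c : Fin n × Fin n → ℂ)
    (E : Finset (Fin n × Fin n)) :
    MAP (∏ e ∈ E, (1 + C (c e) * X e.1 * X e.2))
      = matchingSum (fun e => C (c e) * X e.1 * X e.2) E := by
  rw [prod_one_add, MAP_sum, matchingSum, sum_filter]
  refine sum_congr rfl fun S _ => ?_
  rw [prod_C_mul_X_mul_X, MAP_monomial]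
  congr 1

variable [DecidableEq V]

def eraseVertex (F : Finset (V × V)) (v : V) : Finset (V × V) :=
  F.filter fun f => f.1 ≠ v ∧ f.2 ≠ v

def induce (E : Finset (V × V)) (A : Finset V) : Finset (V × V) :=
  E.filter fun f => f.1 ∈ A ∧ f.2 ∈ A

lemma incidence_insert {S : Finset (V × V)} {e : V × V} (he : e ∉ S) :
    incidence (insert e S) = Finsupp.single e.1 1 + Finsupp.single e.2 1 + incidence S :=
  sum_insert he

lemma incidence_eq_zero_iff {S : Finset (V × V)} {v : V} :
    incidence S v = 0 ↔ ∀ f ∈ S, f.1 ≠ v ∧ f.2 ≠ v := by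
  simp [incidence, Finsupp.finsetSum_apply, sum_eq_zero_iff, Finsupp.single_apply]

lemma subset_eraseVertex_iff {S F : Finset (V × V)} {v : V} :
    S ⊆ eraseVertex F v ↔ S ⊆ F ∧ incidence S v = 0 := by
  simp only [eraseVertex, subset_iff, mem_filter, incidence_eq_zero_iff, ← forall₂_and]

lemma isMatching_insert_iff {S : Finset (V × V)} {e : V × V} (he : e ∉ S)
    (hloop : e.1 ≠ e.2) :
    IsMatching (insert e S) ↔ IsMatching S ∧ incidence S e.1 = 0 ∧ incidence S e.2 = 0 := by
  simp only [IsMatching, incidence_insert he, Finsupp.add_apply, Finsupp.single_apply]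
  refine ⟨fun h => ⟨fun v => (Nat.le_add_left _ _).trans (h v), ?_, ?_⟩, ?_⟩
  · have := h e.1; simp [hloop.symm] at this; omega
  · have := h e.2; simp [hloop] at this; omega
  · rintro ⟨h, h1, h2⟩ v
    by_cases hv1 : e.1 = v
    · subst hv1; simp [hloop.symm, h1]
    by_cases hv2 : e.2 = v
    · subst hv2; simp [hloop, h2]
    simpa [hv1, hv2] using h v

lemma matchingSum_insert (w : V × V → R) {F : Finset (V × V)} {e : V × V} (he : e ∉ F)
    (hloop : e.1 ≠ e.2) :
    matchingSum w (insert e F)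
      = matchingSum w F + w e * matchingSum w (eraseVertex (eraseVertex F e.1) e.2) := by
  classical
  have hpow : (eraseVertex (eraseVertex F e.1) e.2).powerset
      = F.powerset.filter fun S => incidence S e.1 = 0 ∧ incidence S e.2 = 0 := by
    ext S; simp [subset_eraseVertex_iff, and_assoc]
  simp only [matchingSum, sum_filter, sum_powerset_insert he, hpow, mul_sum]
  congr 1
  refine sum_congr rfl fun S hS => ?_
  have heS : e ∉ S := fun h => he (mem_powerset.mp hS h)
  rw [isMatching_insert_iff heS hloop, prod_insert heS]
  by_cases h : incidence S e.1 = 0 ∧ incidence S e.2 = 0 <;> simp [h]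

lemma matchingSum_union_of_incident (w : V × V → R) {F T : Finset (V × V)} {v : V}
    (hF : ∀ f ∈ F, f.1 ≠ v ∧ f.2 ≠ v)
    (hT : ∀ e ∈ T, (e.1 = v ∨ e.2 = v) ∧ e.1 ≠ e.2) :
    matchingSum w (F ∪ T) = matchingSum w F
      + ∑ e ∈ T, w e * matchingSum w (eraseVertex (eraseVertex F e.1) e.2) := by
  induction T using Finset.induction_on with
  | empty => simp
  | insert e T heT ih =>
    obtain ⟨hev, hloop⟩ := hT e (mem_insert_self e T)
    have he : e ∉ F ∪ T := by
      rw [mem_union, not_or]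
      exact ⟨fun h => by have := hF e h; tauto, heT⟩
    have herase : eraseVertex (eraseVertex (F ∪ T) e.1) e.2
        = eraseVertex (eraseVertex F e.1) e.2 := by
      ext f
      simp only [eraseVertex, mem_filter, mem_union]
      constructor
      · rintro ⟨⟨hf | hf, h1⟩, h2⟩
        · exact ⟨⟨hf, h1⟩, h2⟩
        · rcases (hT f (mem_insert_of_mem hf)).1 with rfl | rfl <;> rcases hev with h | h <;>
            simp_all
      · rintro ⟨⟨hf, h1⟩, h2⟩
        exact ⟨⟨Or.inl hf, h1⟩, h2⟩
    rw [union_insert, matchingSum_insert w he hloop, herase,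
      ih fun e' he' => hT e' (mem_insert_of_mem he'), sum_insert heT]
    ring

lemma matchingSum_eq_eraseVertex_add (w : V × V → R) {F : Finset (V × V)}
    (hF : ∀ f ∈ F, f.1 ≠ f.2) (v : V) :
    matchingSum w F = matchingSum w (eraseVertex F v)
      + ∑ e ∈ F with e.1 = v ∨ e.2 = v,
          w e * matchingSum w (eraseVertex (eraseVertex F e.1) e.2) := by
  have hsplit : F = eraseVertex F v ∪ F.filter (fun e => e.1 = v ∨ e.2 = v) := by
    ext f; simp only [eraseVertex, mem_union, mem_filter]; tauto
  conv_lhs => rw [hsplit]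
  rw [matchingSum_union_of_incident w (v := v)]
  · congr 1
    refine sum_congr rfl fun e he => ?_
    congr 2
    ext f
    simp only [eraseVertex, mem_filter]
    rcases (mem_filter.mp he).2 with h | h <;> subst h <;> tauto
  · exact fun f hf => (mem_filter.mp hf).2
  · exact fun e he => ⟨(mem_filter.mp he).2, hF e (mem_filter.mp he).1⟩

lemma eraseVertex_induce (E : Finset (V × V)) (A : Finset V) (v : V) :
    eraseVertex (induce E A) v = induce E (A.erase v) := by
  ext f
  simp only [eraseVertex, induce, mem_filter, mem_erase]
  tauto

lemma induce_univ [Fintype V] (E : Finset (V × V)) : induce E univ = E := by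
  simp [induce]

lemma re_inv_pos {w : ℂ} (hw : 0 < w.re) : 0 < w⁻¹.re := by
  rw [Complex.inv_re]
  exact div_pos hw (Complex.normSq_pos.mpr fun h => by simp [h] at hw)

noncomputable def matchingPoly (E : Finset (V × V)) (lam : V × V → ℝ) (z : V → ℂ)
    (A : Finset V) : ℂ :=
  matchingSum (fun e => (lam e : ℂ) * z e.1 * z e.2) (induce E A)

section Stability

variable {E : Finset (V × V)} {lam : V × V → ℝ} {z : V → ℂ}

local notation "P" => matchingPoly E lam z

lemma matchingPoly_eq_erase_add (hE : ∀ e ∈ E, e.1 ≠ e.2) (A : Finset V) (v : V) :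
    P A = P (A.erase v)
      + ∑ e ∈ induce E A with e.1 = v ∨ e.2 = v,
          (lam e : ℂ) * z e.1 * z e.2 * P ((A.erase e.1).erase e.2) := by
  simpa only [matchingPoly, eraseVertex_induce] using
    matchingSum_eq_eraseVertex_add _ (F := induce E A)
      (fun f hf => hE f (mem_filter.mp hf).1) v

lemma exists_mem_erase_edge_term_eq {A : Finset V} {v : V} {e : V × V} (he1 : e.1 ∈ A)
    (he2 : e.2 ∈ A) (hev : e.1 = v ∨ e.2 = v) (hloop : e.1 ≠ e.2) :
    ∃ u ∈ A.erase v, (lam e : ℂ) * z e.1 * z e.2 * P ((A.erase e.1).erase e.2)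
      = lam e * z v * (z u * P ((A.erase v).erase u)) := by
  rcases hev with rfl | rfl
  · exact ⟨e.2, mem_erase.mpr ⟨hloop.symm, he2⟩, by ring⟩
  · exact ⟨e.1, mem_erase.mpr ⟨hloop, he1⟩, by rw [erase_right_comm]; ring⟩

lemma re_div_matchingPoly_erase_pos (hE : ∀ e ∈ E, e.1 ≠ e.2) (hlam : ∀ e, 0 ≤ lam e)
    (hz : ∀ v, 0 < (z v).re) {A : Finset V} {v : V} (hne : P (A.erase v) ≠ 0)
    (hratio : ∀ u ∈ A.erase v, 0 < (P (A.erase v) / (z u * P ((A.erase v).erase u))).re) :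
    0 < (P A / (z v * P (A.erase v))).re := by
  have hzv : z v ≠ 0 := fun h => by simpa [h] using hz v
  rw [matchingPoly_eq_erase_add hE, add_div, sum_div, Complex.add_re, Complex.re_sum,
    div_mul_cancel_right₀ hne]
  refine add_pos_of_pos_of_nonneg (re_inv_pos (hz v)) (sum_nonneg fun e he => ?_)
  obtain ⟨heE, he1, he2⟩ := mem_filter.mp (mem_filter.mp he).1
  obtain ⟨u, hu, heq⟩ :=
    exists_mem_erase_edge_term_eq he1 he2 (mem_filter.mp he).2 (hE e heE)
  rw [heq, show (lam e : ℂ) * z v * (z u * P ((A.erase v).erase u)) / (z v * P (A.erase v))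
      = lam e * (P (A.erase v) / (z u * P ((A.erase v).erase u)))⁻¹ by field_simp,
    Complex.re_ofReal_mul]
  exact mul_nonneg (hlam e) (re_inv_pos (hratio u hu)).le

theorem matchingPoly_ne_zero_and_re_div_pos (hE : ∀ e ∈ E, e.1 ≠ e.2)
    (hlam : ∀ e, 0 ≤ lam e) (hz : ∀ v, 0 < (z v).re) (A : Finset V) :
    P A ≠ 0 ∧ ∀ v ∈ A, 0 < (P A / (z v * P (A.erase v))).re := by
  induction A using Finset.strongInduction with
  | H A ih =>
    have hratio : ∀ v ∈ A, 0 < (P A / (z v * P (A.erase v))).re := fun v hv =>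
      have ih := ih _ (erase_ssubset hv)
      re_div_matchingPoly_erase_pos hE hlam hz ih.1 ih.2
    refine ⟨?_, hratio⟩
    rcases A.eq_empty_or_nonempty with rfl | ⟨v, hv⟩
    · simp [matchingPoly, induce, matchingSum_empty]
    · intro h
      simpa [h] using hratio v hv

end Stability

end HeilmannLieb

/-- **Heilmann–Lieb theorem (multivariate form).** For a graph on `{1,…,n}` with edge set
`E` (edges being pairs of distinct vertices) and non-negative edge weights `λ_e`, the
multivariate matching polynomial `MAP[∏_{e={i,j}∈E} (1 + λ_e z_i z_j)]` is
`ℍ_{π/2}`-stable: it does not vanish when all `z i` have positive real part. -/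
theorem heilmann_lieb (n : ℕ) (E : Finset (Fin n × Fin n)) (hE : ∀ e ∈ E, e.1 ≠ e.2)
    (lam : Fin n × Fin n → ℝ) (hlam : ∀ e, 0 ≤ lam e)
    (z : Fin n → ℂ) (hz : ∀ i, 0 < (z i).re) :
    eval z (MAP (∏ e ∈ E, (1 + C ((lam e : ℝ) : ℂ) * X e.1 * X e.2))) ≠ 0 := by
  have h : eval z (MAP (∏ e ∈ E, (1 + C ((lam e : ℝ) : ℂ) * X e.1 * X e.2)))
      = HeilmannLieb.matchingPoly E lam z univ := by
    rw [HeilmannLieb.MAP_prod_one_add_C_mul_X_mul_X, HeilmannLieb.map_matchingSum,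
      HeilmannLieb.matchingPoly, HeilmannLieb.induce_univ]
    congr 1
    ext e
    simp
  rw [h]
  exact (HeilmannLieb.matchingPoly_ne_zero_and_re_div_pos hE hlam hz univ).1
end
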